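/- arXiv:2509.11471 — 7 statements merged into one kernel-verified Lean document; each statement's English description precedes it below -/
import Mathlib

section
/- If an r×s (ρ,λ)-Latin rectangle M can be extended to an n×n (ρ,λ)-Latin square, then for every symbol ℓ, ρ_ℓ − |M_ℓ| ≤ λ(2n − r − s), where |M_ℓ| denotes the number of occurrences of symbol ℓ in M. -/
open Finset

/-- If an r×s (ρ,λ)-Latin rectangle M extends to an n×n (ρ,λ)-Latin square N,
then for every symbol ℓ, ρ_ℓ − |M_ℓ| ≤ λ(2n − r − s). -/
theorem stmt0 (r s n k L : ℕ) (hr : r ≤ n) (hs : s ≤ n) (hnk : n ≤ k) (hL : 1 ≤ L)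
    (ρ : Fin k → ℕ) (hρ1 : ∀ ℓ, 1 ≤ ρ ℓ) (hρ2 : ∀ ℓ, ρ ℓ ≤ L * n)
    (hρsum : ∑ ℓ, ρ ℓ = L * n ^ 2)
    (M : Fin r → Fin s → Fin k → ℕ)
    (hMcell : ∀ i j, ∑ ℓ, M i j ℓ = L)
    (hMtot : ∀ ℓ, ∑ i, ∑ j, M i j ℓ ≤ ρ ℓ)
    (hMrow : ∀ i ℓ, ∑ j, M i j ℓ ≤ L)
    (hMcol : ∀ j ℓ, ∑ i, M i j ℓ ≤ L)
    (N : Fin n → Fin n → Fin k → ℕ)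
    (hNcell : ∀ i j, ∑ ℓ, N i j ℓ = L)
    (hNtot : ∀ ℓ, ∑ i, ∑ j, N i j ℓ = ρ ℓ)
    (hNrow : ∀ i ℓ, ∑ j, N i j ℓ ≤ L)
    (hNcol : ∀ j ℓ, ∑ i, N i j ℓ ≤ L)
    (hext : ∀ i j, N (Fin.castLE hr i) (Fin.castLE hs j) = M i j) :
    ∀ ℓ, ρ ℓ - ∑ i, ∑ j, M i j ℓ ≤ L * (2 * n - r - s) := by
  intro ℓ
  classical
  set R : Finset (Fin n) := univ.filter (fun i : Fin n => (i : ℕ) < r) with hR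
  set C : Finset (Fin n) := univ.filter (fun j : Fin n => (j : ℕ) < s) with hC
  have hRmap : R = univ.map (Fin.castLEEmb hr) := by
    ext i
    simp only [hR, mem_filter, mem_univ, true_and, mem_map, Fin.castLEEmb]
    constructor
    · intro h; exact ⟨⟨i, h⟩, by simp [Fin.castLE, Fin.ext_iff]⟩
    · rintro ⟨a, ha⟩; simpa [Fin.castLE, Fin.ext_iff] using ha ▸ a.isLt
  have hCmap : C = univ.map (Fin.castLEEmb hs) := by
    ext j
    simp only [hC, mem_filter, mem_univ, true_and, mem_map, Fin.castLEEmb]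
    constructor
    · intro h; exact ⟨⟨j, h⟩, by simp [Fin.castLE, Fin.ext_iff]⟩
    · rintro ⟨a, ha⟩; simpa [Fin.castLE, Fin.ext_iff] using ha ▸ a.isLt
  have hcardR : Rᶜ.card = n - r := by
    have : R.card = r := by rw [hRmap]; simp
    have h2 := Finset.card_compl R
    rw [Fintype.card_fin] at h2
    omega
  have hcardC : Cᶜ.card = n - s := by
    have : C.card = s := by rw [hCmap]; simp
    have h2 := Finset.card_compl C
    rw [Fintype.card_fin] at h2
    omega
  -- the M part
  have hA : ∑ i ∈ R, ∑ j ∈ C, N i j ℓ = ∑ i, ∑ j, M i j ℓ := by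
    rw [hRmap, hCmap, Finset.sum_map]
    refine Finset.sum_congr rfl fun i _ => ?_
    rw [Finset.sum_map]
    refine Finset.sum_congr rfl fun j _ => ?_
    simp [Fin.castLEEmb, hext]
  have hkey : ρ ℓ ≤ (∑ i, ∑ j, M i j ℓ) + (L * (n - r) + L * (n - s)) := by
    rw [← hNtot ℓ]
    have h1 : ∑ i, ∑ j, N i j ℓ
        = (∑ i ∈ R, ∑ j, N i j ℓ) + ∑ i ∈ Rᶜ, ∑ j, N i j ℓ := by
      rw [Finset.sum_add_sum_compl]
    have h2 : ∀ i, ∑ j, N i j ℓ = (∑ j ∈ C, N i j ℓ) + ∑ j ∈ Cᶜ, N i j ℓ := by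
      intro i; rw [Finset.sum_add_sum_compl]
    have hrest1 : ∑ i ∈ Rᶜ, ∑ j, N i j ℓ ≤ L * (n - r) := by
      calc ∑ i ∈ Rᶜ, ∑ j, N i j ℓ ≤ ∑ _i ∈ Rᶜ, L :=
            Finset.sum_le_sum fun i _ => hNrow i ℓ
        _ = L * (n - r) := by rw [Finset.sum_const, hcardR]; ring
    have hrest2 : ∑ i ∈ R, ∑ j ∈ Cᶜ, N i j ℓ ≤ L * (n - s) := by
      calc ∑ i ∈ R, ∑ j ∈ Cᶜ, N i j ℓ
          ≤ ∑ i, ∑ j ∈ Cᶜ, N i j ℓ :=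
            Finset.sum_le_sum_of_subset (Finset.subset_univ R)
        _ = ∑ j ∈ Cᶜ, ∑ i, N i j ℓ := Finset.sum_comm
        _ ≤ ∑ _j ∈ Cᶜ, L := Finset.sum_le_sum fun j _ => hNcol j ℓ
        _ = L * (n - s) := by rw [Finset.sum_const, hcardC]; ring
    calc ∑ i, ∑ j, N i j ℓ
        = (∑ i ∈ R, ((∑ j ∈ C, N i j ℓ) + ∑ j ∈ Cᶜ, N i j ℓ)) + ∑ i ∈ Rᶜ, ∑ j, N i j ℓ := by
          rw [h1]; congr 1; exact Finset.sum_congr rfl fun i _ => h2 i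
      _ = (∑ i, ∑ j, M i j ℓ) + ((∑ i ∈ R, ∑ j ∈ Cᶜ, N i j ℓ) + ∑ i ∈ Rᶜ, ∑ j, N i j ℓ) := by
          rw [Finset.sum_add_distrib, hA]; ring
      _ ≤ (∑ i, ∑ j, M i j ℓ) + (L * (n - s) + L * (n - r)) := by
          exact Nat.add_le_add_left (Nat.add_le_add hrest2 hrest1) _
      _ = (∑ i, ∑ j, M i j ℓ) + (L * (n - r) + L * (n - s)) := by ring
  have hsplit : L * (2 * n - r - s) = L * (n - r) + L * (n - s) := by
    rw [← Nat.mul_add]; congr 1; omega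
  omega
end

section
/- Suppose an r×s (ρ,λ)-Latin rectangle M extends to an n×n (ρ,λ)-Latin square N = [[M,A],[B,C]]. For any subset K of symbols, Σ_{i∈[r]} max(0, λn − λs + |M_K^i| − λ|K|) ≤ Σ_{ℓ∉K} |A_ℓ|, where |M_K^i| is the number of occurrences of symbols of K in row i of M and |A_ℓ| the number of occurrences of ℓ in A. -/
open Finset

lemma sum_ite_lt_eq {n r : ℕ} (hr : r ≤ n) (g : Fin n → ℕ) :
    ∑ i : Fin n, (if (i:ℕ) < r then g i else 0) = ∑ i : Fin r, g (Fin.castLE hr i) := by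
  have h1 : ∑ i : Fin r, g (Fin.castLE hr i)
      = ∑ i ∈ Finset.univ.map (Fin.castLEEmb hr), g i := by
    rw [Finset.sum_map]; simp [Fin.castLEEmb]
  rw [← Finset.sum_filter, h1]
  congr 1
  ext x
  simp only [Finset.mem_filter, Finset.mem_univ, true_and, Finset.mem_map, Fin.castLEEmb,
    Function.Embedding.coeFn_mk]
  constructor
  · intro hx; exact ⟨⟨x, hx⟩, by simp [Fin.castLE]⟩
  · rintro ⟨y, rfl⟩; simp

/-- If an r×s (ρ,λ)-Latin rectangle M extends to an n×n (ρ,λ)-Latin square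
N = [[M,A],[B,C]], then for every set K of symbols,
Σ_{i∈[r]} max(0, λn − λs + |M_K^i| − λ|K|) ≤ Σ_{ℓ∉K} |A_ℓ|. -/
theorem stmt2 (r s n k L : ℕ) (hr : r ≤ n) (hs : s ≤ n) (hnk : n ≤ k) (hL : 1 ≤ L)
    (ρ : Fin k → ℕ) (hρ1 : ∀ ℓ, 1 ≤ ρ ℓ) (hρ2 : ∀ ℓ, ρ ℓ ≤ L * n)
    (hρsum : ∑ ℓ, ρ ℓ = L * n ^ 2)
    (M : Fin r → Fin s → Fin k → ℕ)
    (hMcell : ∀ i j, ∑ ℓ, M i j ℓ = L)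
    (hMtot : ∀ ℓ, ∑ i, ∑ j, M i j ℓ ≤ ρ ℓ)
    (hMrow : ∀ i ℓ, ∑ j, M i j ℓ ≤ L)
    (hMcol : ∀ j ℓ, ∑ i, M i j ℓ ≤ L)
    (N : Fin n → Fin n → Fin k → ℕ)
    (hNcell : ∀ i j, ∑ ℓ, N i j ℓ = L)
    (hNtot : ∀ ℓ, ∑ i, ∑ j, N i j ℓ = ρ ℓ)
    (hNrow : ∀ i ℓ, ∑ j, N i j ℓ ≤ L)
    (hNcol : ∀ j ℓ, ∑ i, N i j ℓ ≤ L)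
    (hext : ∀ i j, N (Fin.castLE hr i) (Fin.castLE hs j) = M i j) :
    ∀ K : Finset (Fin k),
      ∑ i : Fin r, (L * n - L * s + (∑ j, ∑ ℓ ∈ K, M i j ℓ) - L * K.card) ≤
        ∑ ℓ ∈ Kᶜ, ∑ i : Fin n, ∑ j : Fin n,
          if (i : ℕ) < r ∧ s ≤ (j : ℕ) then N i j ℓ else 0 := by
  intro K
  -- rewrite the RHS as a sum over rows of Fin r
  have hR : (∑ ℓ ∈ Kᶜ, ∑ i : Fin n, ∑ j : Fin n,
        if (i : ℕ) < r ∧ s ≤ (j : ℕ) then N i j ℓ else 0)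
      = ∑ i : Fin r, ∑ ℓ ∈ Kᶜ, ∑ j : Fin n,
          if s ≤ (j : ℕ) then N (Fin.castLE hr i) j ℓ else 0 := by
    rw [Finset.sum_comm]
    rw [← sum_ite_lt_eq hr
      (fun i => ∑ ℓ ∈ Kᶜ, ∑ j : Fin n, if s ≤ (j:ℕ) then N i j ℓ else 0)]
    apply Finset.sum_congr rfl
    intro i _
    by_cases h : (i:ℕ) < r
    · simp [h, ite_and]
    · simp [h, ite_and]
  rw [hR]
  apply Finset.sum_le_sum
  intro i _
  -- abbreviations
  set A : Fin k → ℕ := fun ℓ => ∑ j : Fin n,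
      if s ≤ (j:ℕ) then N (Fin.castLE hr i) j ℓ else 0 with hA
  set B : Fin k → ℕ := fun ℓ => ∑ j : Fin n,
      if (j:ℕ) < s then N (Fin.castLE hr i) j ℓ else 0 with hBdef
  have hrowsum : ∀ ℓ, B ℓ + A ℓ = ∑ j, N (Fin.castLE hr i) j ℓ := by
    intro ℓ
    rw [hA, hBdef, ← Finset.sum_add_distrib]
    apply Finset.sum_congr rfl
    intro j _
    by_cases h : (j:ℕ) < s
    · simp [h, Nat.not_le.mpr h]
    · simp [h, Nat.not_lt.mp h]
  have hB : ∀ ℓ, B ℓ = ∑ j : Fin s, M i j ℓ := by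
    intro ℓ
    show (∑ j : Fin n, if (j:ℕ) < s then N (Fin.castLE hr i) j ℓ else 0) = _
    rw [sum_ite_lt_eq hs (fun j => N (Fin.castLE hr i) j ℓ)]
    apply Finset.sum_congr rfl
    intro j _
    rw [hext i j]
  -- total of B over all symbols
  have hBtot : ∑ ℓ, B ℓ = L * s := by
    simp only [hB]
    rw [Finset.sum_comm]
    simp [hMcell, mul_comm]
  -- total of B + A over all symbols
  have hBAtot : ∑ ℓ, (B ℓ + A ℓ) = L * n := by
    simp only [hrowsum]
    rw [Finset.sum_comm]
    simp [hNcell, mul_comm]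
  have hAtot : ∑ ℓ, B ℓ + ∑ ℓ, A ℓ = L * n := by
    rw [← Finset.sum_add_distrib]; exact hBAtot
  have hsplit : ∑ ℓ ∈ K, A ℓ + ∑ ℓ ∈ Kᶜ, A ℓ = ∑ ℓ, A ℓ :=
    Finset.sum_add_sum_compl K A
  have hK : ∑ ℓ ∈ K, B ℓ + ∑ ℓ ∈ K, A ℓ ≤ L * K.card := by
    rw [← Finset.sum_add_distrib]
    calc ∑ ℓ ∈ K, (B ℓ + A ℓ) ≤ ∑ ℓ ∈ K, L := by
          apply Finset.sum_le_sum
          intro ℓ _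
          rw [hrowsum]
          exact hNrow _ ℓ
      _ = L * K.card := by simp [mul_comm]
  have hMK : (∑ j, ∑ ℓ ∈ K, M i j ℓ) = ∑ ℓ ∈ K, B ℓ := by
    rw [Finset.sum_comm]
    apply Finset.sum_congr rfl
    intro ℓ _
    exact (hB ℓ).symm
  rw [hMK]
  show L * n - L * s + (∑ ℓ ∈ K, B ℓ) - L * K.card ≤ ∑ ℓ ∈ Kᶜ, A ℓ
  generalize hln : L * n = Ln at hAtot ⊢
  generalize hls : L * s = Ls at hBtot ⊢
  generalize hlk : L * K.card = Lk at hK ⊢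
  omega
end

section
/- For λ ≤ k and n ≥ max(k+r, k+s, k+λ, r+s), any simple partial r×s λ-Latin rectangle on symbol set [k] can be extended to a simple n×n λ-Latin square on symbol set [n]. -/
/-!
Fill every cell of the partial rectangle with new symbols from `Fin (n - k)`, taken cyclically
from position `i + j`; then each new symbol occurs at most `λ` times in every row and column.
Next add the `n - s` missing columns, and finally the `n - r` missing rows. In both steps the
missing copies of the symbols form a matrix with entries at most `q` and all line sums `q λ`
(for the columns only after padding it with `n - r` extra rows), and such a matrix is a sum of
`q` zero-one matrices with line sums `λ`, one for each new line.

That decomposition is a rounding argument: the entries strictly between `0` and `q` of a matrix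
whose line sums are divisible by `q` contain an alternating cycle, and shifting along the cycle
as far as possible keeps the line sums and makes one of these entries `0` or `q`.
-/

open Finset Function

section AlternatingCycle

variable {α β : Type*} {E : α → β → Prop}

lemma exists_alternating_walk (hrow : ∀ a b, E a b → ∃ b', b' ≠ b ∧ E a b')
    (hcol : ∀ a b, E a b → ∃ a', a' ≠ a ∧ E a' b) {a₀ : α} {b₀ : β} (h₀ : E a₀ b₀) :
    ∃ (R : ℕ → α) (C : ℕ → β), ∀ t, E (R t) (C t) ∧ E (R (t + 1)) (C t) ∧
      R (t + 1) ≠ R t ∧ C (t + 1) ≠ C t := by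
  have step : ∀ e : {e : α × β // E e.1 e.2}, ∃ e' : {e : α × β // E e.1 e.2},
      E e'.1.1 e.1.2 ∧ e'.1.1 ≠ e.1.1 ∧ e'.1.2 ≠ e.1.2 := by
    rintro ⟨⟨a, b⟩, h⟩
    obtain ⟨a', ha', hE⟩ := hcol a b h
    obtain ⟨b', hb', hE'⟩ := hrow a' b hE
    exact ⟨⟨(a', b'), hE'⟩, hE, ha', hb'⟩
  choose next hnext using step
  let walk : ℕ → {e : α × β // E e.1 e.2} := fun t => next^[t] ⟨(a₀, b₀), h₀⟩
  refine ⟨fun t => (walk t).1.1, fun t => (walk t).1.2, fun t => ?_⟩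
  simp only [walk, iterate_succ_apply']
  exact ⟨(walk t).2, hnext _⟩

lemma exists_first_recurrence [Finite α] {R : ℕ → α} {C : ℕ → β}
    (hR : ∀ t, R (t + 1) ≠ R t) (hC : ∀ t, C (t + 1) ≠ C t) :
    ∃ a m, (R a = R (a + (m + 2)) ∨ C a = C (a + (m + 2))) ∧
      ∀ x y, x < y → y < x + (m + 2) → R x ≠ R y ∧ C x ≠ C y := by
  classical
  have hex : ∃ d, 0 < d ∧ ∃ a, R a = R (a + d) ∨ C a = C (a + d) := by
    obtain ⟨x, y, hxy, h⟩ := Finite.exists_ne_map_eq_of_infinite R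
    rcases hxy.lt_or_gt with hlt | hlt
    · exact ⟨y - x, by omega, x, .inl (by rwa [Nat.add_sub_cancel' hlt.le])⟩
    · exact ⟨x - y, by omega, y, .inl (by rw [Nat.add_sub_cancel' hlt.le, h])⟩
  obtain ⟨-, a, ha⟩ := Nat.find_spec hex
  have hmin : ∀ x y, x < y → y < x + Nat.find hex → R x ≠ R y ∧ C x ≠ C y := by
    intro x y hxy hy
    have hy' : x + (y - x) = y := by omega
    have := Nat.find_min hex (show y - x < Nat.find hex by omega)
    rw [not_and, not_exists] at this
    have := this (by omega) x
    rw [hy', not_or] at this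
    exact this
  have hne : Nat.find hex ≠ 1 := fun h => by
    rw [h] at ha
    exact ha.elim (fun h => hR a h.symm) (fun h => hC a h.symm)
  obtain ⟨m, hm⟩ : ∃ m, Nat.find hex = m + 2 :=
    ⟨Nat.find hex - 2, by have := (Nat.find_spec hex).1; omega⟩
  exact ⟨a, m, hm ▸ ha, hm ▸ hmin⟩

lemma injective_of_forall_lt_ne {γ : Type*} {f : ℕ → γ} {b m : ℕ}
    (hf : ∀ x y, x < y → y < x + m → f x ≠ f y) : Injective fun u : Fin m => f (b + u) := by
  intro u v huv
  by_contra hne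
  rcases lt_or_gt_of_ne (Fin.val_ne_of_ne hne) with h | h
  · exact hf _ _ (by omega) (by omega) huv
  · exact hf _ _ (by omega) (by omega) huv.symm

lemma exists_alternating_cycle [Finite α] (hrow : ∀ a b, E a b → ∃ b', b' ≠ b ∧ E a b')
    (hcol : ∀ a b, E a b → ∃ a', a' ≠ a ∧ E a' b) {a₀ : α} {b₀ : β} (h₀ : E a₀ b₀) :
    ∃ (m : ℕ) (I : Fin (m + 2) → α) (J : Fin (m + 2) → β), Injective I ∧ Injective J ∧
      ∀ t, E (I t) (J t) ∧ E (I t) (J (t + 1)) := by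
  obtain ⟨R, C, hwalk⟩ := exists_alternating_walk hrow hcol h₀
  obtain ⟨a, m, hrec, hdist⟩ :=
    exists_first_recurrence (fun t => (hwalk t).2.2.1) (fun t => (hwalk t).2.2.2)
  -- whichever of the row and the column recurs closes the cycle
  have hclose : E (R (a + (m + 2))) (C a) := by
    rcases hrec with h | h
    · exact h ▸ (hwalk a).1
    · exact h ▸ (hwalk _).1
  refine ⟨m, fun u => R (a + 1 + u), fun u => C (a + u),
    injective_of_forall_lt_ne fun x y h h' => (hdist x y h h').1,
    injective_of_forall_lt_ne fun x y h h' => (hdist x y h h').2, fun u => ⟨?_, ?_⟩⟩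
  · simpa only [add_right_comm] using (hwalk (a + u)).2.1
  · show E (R (a + 1 + u)) (C (a + ((u + 1 : Fin (m + 2)) : ℕ)))
    rw [Fin.val_add_one]
    split_ifs with hu
    · simpa [hu, Nat.add_assoc, Nat.add_comm 1] using hclose
    · simpa only [Nat.add_assoc, Nat.add_comm 1] using (hwalk (a + (u + 1))).1

end AlternatingCycle

lemma exists_ne_fractional {ι : Type*} [Fintype ι] {q : ℕ} {f : ι → ℕ} (hf : ∀ i, f i ≤ q)
    (hdvd : q ∣ ∑ i, f i) {i₀ : ι} (h₀ : 0 < f i₀ ∧ f i₀ < q) :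
    ∃ i, i ≠ i₀ ∧ 0 < f i ∧ f i < q := by
  classical
  by_contra! h
  have : q ∣ ∑ i ∈ univ.erase i₀, f i := dvd_sum fun i hi => by
    obtain hfi | hfi := (f i).eq_zero_or_pos
    · simp [hfi]
    · rw [le_antisymm (hf i) (h i (ne_of_mem_erase hi) hfi)]
  rw [← add_sum_erase _ _ (mem_univ i₀), Nat.dvd_add_left this] at hdvd
  exact absurd (Nat.le_of_dvd h₀.1 hdvd) (by omega)

lemma sum_add_mul_tsub_mul {ι : Type*} [Fintype ι] {f g h : ι → ℕ} {δ : ℕ}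
    (hle : ∀ i, δ * h i ≤ f i + δ * g i) (hgh : ∑ i, g i = ∑ i, h i) :
    ∑ i, (f i + δ * g i - δ * h i) = ∑ i, f i := by
  rw [sum_tsub_distrib _ fun i _ => hle i, sum_add_distrib, ← mul_sum, ← mul_sum, hgh,
    Nat.add_sub_cancel]

lemma sum_card_filter_and_eq {γ κ : Type*} [Fintype γ] [Fintype κ] [DecidableEq κ]
    (P : γ → Prop) [DecidablePred P] (f : γ → κ) :
    ∑ k, #{c | P c ∧ f c = k} = #{c | P c} := by
  rw [card_eq_sum_card_fiberwise (f := f) (t := univ) fun _ _ => mem_univ _]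
  simp only [filter_filter]

lemma card_filter_apply_eq_and_eq {γ α β : Type*} [Fintype γ] [DecidableEq α] [DecidableEq β]
    {I : γ → α} (hI : Injective I) (K : γ → β) (t : γ) (j : β) :
    #{u | I u = I t ∧ K u = j} = if K t = j then 1 else 0 := by
  have : filter (fun u => I u = I t ∧ K u = j) univ = filter (fun u => K u = j) {t} := by
    ext u; simp [hI.eq_iff]
  rw [this, filter_singleton]
  split_ifs <;> rfl

section CycleShift

variable {α β : Type*} [DecidableEq α] [DecidableEq β] {m : ℕ}
  {I : Fin (m + 2) → α} {J : Fin (m + 2) → β}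

def cycleShift (D : α → β → ℕ) (I : Fin (m + 2) → α) (J : Fin (m + 2) → β) (δ : ℕ)
    (i : α) (j : β) : ℕ :=
  D i j + δ * #{t | I t = i ∧ J t = j} - δ * #{t | I t = i ∧ J (t + 1) = j}

variable {D : α → β → ℕ} {δ : ℕ}

lemma cycleShift_apply_left (hI : Injective I) (hJ : Injective J) (t : Fin (m + 2)) :
    cycleShift D I J δ (I t) (J t) = D (I t) (J t) + δ := by
  simp [cycleShift, card_filter_apply_eq_and_eq hI, hJ.ne (show t + 1 ≠ t by simp)]

lemma cycleShift_apply_right (hI : Injective I) (hJ : Injective J) (t : Fin (m + 2)) :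
    cycleShift D I J δ (I t) (J (t + 1)) = D (I t) (J (t + 1)) - δ := by
  simp [cycleShift, card_filter_apply_eq_and_eq hI, hJ.ne (show t ≠ t + 1 by simp)]

lemma cycleShift_cases (hI : Injective I) (hJ : Injective J) (i : α) (j : β) :
    cycleShift D I J δ i j = D i j ∨
      (∃ t, I t = i ∧ J t = j ∧ cycleShift D I J δ i j = D i j + δ) ∨
      (∃ t, I t = i ∧ J (t + 1) = j ∧ cycleShift D I J δ i j = D i j - δ) := by
  by_cases hl : ∃ t, I t = i ∧ J t = j
  · obtain ⟨t, rfl, rfl⟩ := hl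
    exact .inr <| .inl ⟨t, rfl, rfl, cycleShift_apply_left hI hJ t⟩
  by_cases hr : ∃ t, I t = i ∧ J (t + 1) = j
  · obtain ⟨t, rfl, rfl⟩ := hr
    exact .inr <| .inr ⟨t, rfl, rfl, cycleShift_apply_right hI hJ t⟩
  push Not at hl hr
  have hl' : #{t | I t = i ∧ J t = j} = 0 :=
    card_filter_eq_zero_iff.2 fun t _ h => hl t h.1 h.2
  have hr' : #{t | I t = i ∧ J (t + 1) = j} = 0 :=
    card_filter_eq_zero_iff.2 fun t _ h => hr t h.1 h.2
  simp [cycleShift, hl', hr']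

end CycleShift

section Rounding

variable {α β : Type*} [Fintype α] [Fintype β] {q : ℕ}

def fractionalCells (q : ℕ) (D : α → β → ℕ) : Finset (α × β) :=
  {x | 0 < D x.1 x.2 ∧ D x.1 x.2 < q}

@[simp]
lemma mem_fractionalCells {D : α → β → ℕ} {x : α × β} :
    x ∈ fractionalCells q D ↔ 0 < D x.1 x.2 ∧ D x.1 x.2 < q := by
  simp [fractionalCells]

structure IsRebalancing (q : ℕ) (D D' : α → β → ℕ) : Prop where
  le : ∀ i j, D' i j ≤ q
  row_sum : ∀ i, ∑ j, D' i j = ∑ j, D i j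
  col_sum : ∀ j, ∑ i, D' i j = ∑ i, D i j
  eq_zero : ∀ i j, D i j = 0 → D' i j = 0
  eq_bound : ∀ i j, D i j = q → D' i j = q

namespace IsRebalancing

variable {D D' D'' : α → β → ℕ}

lemma refl (hD : ∀ i j, D i j ≤ q) : IsRebalancing q D D :=
  ⟨hD, fun _ => rfl, fun _ => rfl, fun _ _ => id, fun _ _ => id⟩

lemma trans (h : IsRebalancing q D D') (h' : IsRebalancing q D' D'') : IsRebalancing q D D'' :=
  ⟨h'.le, fun i => (h'.row_sum i).trans (h.row_sum i),
    fun j => (h'.col_sum j).trans (h.col_sum j),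
    fun i j hij => h'.eq_zero i j (h.eq_zero i j hij),
    fun i j hij => h'.eq_bound i j (h.eq_bound i j hij)⟩

end IsRebalancing

/-- Each row and each column of the cycle meets the shift once with `+ δ` and once with
`- δ`. -/
lemma isRebalancing_cycleShift [DecidableEq α] [DecidableEq β] {m : ℕ}
    {I : Fin (m + 2) → α} {J : Fin (m + 2) → β} {D : α → β → ℕ} {δ : ℕ}
    (hD : ∀ i j, D i j ≤ q) (hI : Injective I) (hJ : Injective J)
    (hcyc : ∀ t, (I t, J t) ∈ fractionalCells q D ∧ (I t, J (t + 1)) ∈ fractionalCells q D)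
    (hδ : ∀ t, δ ≤ q - D (I t) (J t) ∧ δ ≤ D (I t) (J (t + 1))) :
    IsRebalancing q D (cycleShift D I J δ) ∧
      fractionalCells q (cycleShift D I J δ) ⊆ fractionalCells q D := by
  have hle : ∀ i j,
      δ * #{t | I t = i ∧ J (t + 1) = j} ≤ D i j + δ * #{t | I t = i ∧ J t = j} := by
    intro i j
    by_cases h : ∃ t, I t = i ∧ J (t + 1) = j
    · obtain ⟨t, rfl, rfl⟩ := h
      simpa [card_filter_apply_eq_and_eq hI] using le_add_right (hδ t).2
    · push Not at h
      simp [card_filter_eq_zero_iff.2 fun t _ (ht : I t = i ∧ J (t + 1) = j) => h t ht.1 ht.2]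
  have hfix : ∀ i j, (i, j) ∉ fractionalCells q D → cycleShift D I J δ i j = D i j := by
    intro i j hx
    rcases cycleShift_cases hI hJ i j with h | ⟨t, rfl, rfl, -⟩ | ⟨t, rfl, rfl, -⟩
    exacts [h, absurd (hcyc t).1 hx, absurd (hcyc t).2 hx]
  refine ⟨⟨fun i j => ?_, fun i => ?_, fun j => ?_, fun i j hij => ?_, fun i j hij => ?_⟩, ?_⟩
  · rcases cycleShift_cases hI hJ i j with h | ⟨t, rfl, rfl, h⟩ | ⟨t, -, -, h⟩ <;> rw [h]
    · exact hD i j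
    · have := (hδ t).1; have := hD (I t) (J t); omega
    · exact (Nat.sub_le _ _).trans (hD i j)
  · refine sum_add_mul_tsub_mul (hle i) ?_
    simp only [sum_card_filter_and_eq]
  · refine sum_add_mul_tsub_mul (fun i => hle i j) ?_
    simp only [and_comm (a := I _ = _), sum_card_filter_and_eq]
    exact (card_equiv (Equiv.addRight 1) (by simp)).symm
  · exact (hfix i j (by simp [hij])).trans hij
  · exact (hfix i j (by simp [hij])).trans hij
  · rintro ⟨i, j⟩ hx
    by_contra h
    exact h (by simpa [hfix i j h] using hx)

/-- The largest admissible shift along a cycle of fractional cells makes one of them integral. -/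
lemma exists_rebalancing_of_cycle {D : α → β → ℕ} (hD : ∀ i j, D i j ≤ q) {m : ℕ}
    {I : Fin (m + 2) → α} {J : Fin (m + 2) → β} (hI : Injective I) (hJ : Injective J)
    (hcyc : ∀ t, (I t, J t) ∈ fractionalCells q D ∧ (I t, J (t + 1)) ∈ fractionalCells q D) :
    ∃ D', IsRebalancing q D D' ∧ fractionalCells q D' ⊂ fractionalCells q D := by
  classical
  obtain ⟨t₀, -, ht₀⟩ := exists_min_image univ
    (fun t => min (q - D (I t) (J t)) (D (I t) (J (t + 1)))) univ_nonempty
  set δ := min (q - D (I t₀) (J t₀)) (D (I t₀) (J (t₀ + 1)))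
  have hδ : ∀ t, δ ≤ q - D (I t) (J t) ∧ δ ≤ D (I t) (J (t + 1)) := fun t =>
    le_min_iff.1 (ht₀ t (mem_univ t))
  obtain ⟨hreb, hsub⟩ := isRebalancing_cycleShift hD hI hJ hcyc hδ
  refine ⟨_, hreb, (ssubset_iff_of_subset hsub).2 ?_⟩
  have h₀ := hcyc t₀
  simp only [mem_fractionalCells] at h₀
  rcases min_choice (q - D (I t₀) (J t₀)) (D (I t₀) (J (t₀ + 1))) with h | h
  · refine ⟨_, (hcyc t₀).1, fun hx => ?_⟩
    rw [mem_fractionalCells, cycleShift_apply_left hI hJ] at hx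
    omega
  · refine ⟨_, (hcyc t₀).2, fun hx => ?_⟩
    rw [mem_fractionalCells, cycleShift_apply_right hI hJ] at hx
    omega

lemma exists_rebalancing_ssubset {D : α → β → ℕ} (hD : ∀ i j, D i j ≤ q)
    (hrow : ∀ i, q ∣ ∑ j, D i j) (hcol : ∀ j, q ∣ ∑ i, D i j)
    (hne : (fractionalCells q D).Nonempty) :
    ∃ D', IsRebalancing q D D' ∧ fractionalCells q D' ⊂ fractionalCells q D := by
  obtain ⟨⟨a₀, b₀⟩, h₀⟩ := hne
  rw [mem_fractionalCells] at h₀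
  obtain ⟨m, I, J, hI, hJ, hcyc⟩ :=
    exists_alternating_cycle (E := fun a b => 0 < D a b ∧ D a b < q)
    (fun a _ h => exists_ne_fractional (fun j => hD a j) (hrow a) h)
    (fun _ b h => exists_ne_fractional (fun i => hD i b) (hcol b) h) h₀
  exact exists_rebalancing_of_cycle hD hI hJ fun t => by simpa using hcyc t

lemma exists_rebalancing_fractionalCells_eq_empty {D : α → β → ℕ} (hD : ∀ i j, D i j ≤ q)
    (hrow : ∀ i, q ∣ ∑ j, D i j) (hcol : ∀ j, q ∣ ∑ i, D i j) :
    ∃ D', IsRebalancing q D D' ∧ fractionalCells q D' = ∅ := by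
  induction hk : #(fractionalCells q D) using Nat.strong_induction_on generalizing D with
  | _ k ih =>
  obtain hempty | hne := (fractionalCells q D).eq_empty_or_nonempty
  · exact ⟨D, .refl hD, hempty⟩
  obtain ⟨D', hD', hlt⟩ := exists_rebalancing_ssubset hD hrow hcol hne
  obtain ⟨D'', hD'', hempty⟩ := ih _ (hk ▸ card_lt_card hlt) hD'.le
    (fun i => hD'.row_sum i ▸ hrow i) (fun j => hD'.col_sum j ▸ hcol j) rfl
  exact ⟨D'', hD'.trans hD'', hempty⟩

lemma exists_zeroOne_le {D : α → β → ℕ} (hq : 0 < q) (hD : ∀ i j, D i j ≤ q)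
    {a : α → ℕ} {b : β → ℕ} (hrow : ∀ i, ∑ j, D i j = q * a i)
    (hcol : ∀ j, ∑ i, D i j = q * b j) :
    ∃ x : α → β → ℕ, (∀ i j, x i j ≤ 1) ∧ (∀ i j, x i j ≤ D i j) ∧
      (∀ i j, D i j = q → x i j = 1) ∧ (∀ i, ∑ j, x i j = a i) ∧ ∀ j, ∑ i, x i j = b j := by
  obtain ⟨D', hD', hempty⟩ := exists_rebalancing_fractionalCells_eq_empty hD
    (fun i => hrow i ▸ dvd_mul_right q (a i)) (fun j => hcol j ▸ dvd_mul_right q (b j))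
  have hD'01 : ∀ i j, D' i j = 0 ∨ D' i j = q := fun i j => by
    have hx : (i, j) ∉ fractionalCells q D' := by simp [hempty]
    have := hD'.le i j
    simp only [mem_fractionalCells, not_and, not_lt] at hx
    omega
  have hdvd : ∀ i j, q ∣ D' i j := fun i j => by
    rcases hD'01 i j with h | h <;> simp [h]
  refine ⟨fun i j => D' i j / q, fun i j => ?_, fun i j => ?_, fun i j hij => ?_,
    fun i => ?_, fun j => ?_⟩
  · rcases hD'01 i j with h | h <;> simp [h, Nat.div_self hq]
  · by_cases h0 : D i j = 0
    · simp [hD'.eq_zero i j h0, h0]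
    · rcases hD'01 i j with h | h <;> simp [h, Nat.div_self hq]
      omega
  · simp [hD'.eq_bound i j hij, Nat.div_self hq]
  · rw [← Nat.sum_div fun j _ => hdvd i j, hD'.row_sum, hrow, Nat.mul_div_cancel_left _ hq]
  · rw [← Nat.sum_div fun i _ => hdvd i j, hD'.col_sum, hcol, Nat.mul_div_cancel_left _ hq]

lemma exists_zeroOne_decomposition {D : α → β → ℕ} (hD : ∀ i j, D i j ≤ q)
    {a : α → ℕ} {b : β → ℕ} (hrow : ∀ i, ∑ j, D i j = q * a i)
    (hcol : ∀ j, ∑ i, D i j = q * b j) :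
    ∃ x : Fin q → α → β → ℕ, (∀ c i j, x c i j ≤ 1) ∧ (∀ c i, ∑ j, x c i j = a i) ∧
      (∀ c j, ∑ i, x c i j = b j) ∧ ∀ i j, ∑ c, x c i j = D i j := by
  induction q generalizing D with
  | zero => exact ⟨finZeroElim, finZeroElim, finZeroElim, finZeroElim,
      fun i j => by simpa using ((hD i j).antisymm (Nat.zero_le _)).symm⟩
  | succ q ih =>
  obtain ⟨x₀, hx₀1, hx₀D, hx₀q, hx₀row, hx₀col⟩ := exists_zeroOne_le q.succ_pos hD hrow hcol
  obtain ⟨x, hx1, hxrow, hxcol, hxsum⟩ := ih (D := fun i j => D i j - x₀ i j)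
    (fun i j => by
      by_cases h : D i j = q + 1
      · simp [h, hx₀q i j h]
      · have := hD i j; omega)
    (fun i => by rw [sum_tsub_distrib _ fun j _ => hx₀D i j, hrow, hx₀row]; ring_nf; omega)
    (fun j => by rw [sum_tsub_distrib _ fun i _ => hx₀D i j, hcol, hx₀col]; ring_nf; omega)
  refine ⟨Fin.cons x₀ x, Fin.cases hx₀1 hx1, Fin.cases hx₀row hxrow, Fin.cases hx₀col hxcol,
    fun i j => ?_⟩
  rw [Fin.sum_univ_succ]
  simp only [Fin.cons_zero, Fin.cons_succ, hxsum]
  have := hx₀D i j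
  omega

end Rounding

/-- Hermite's identity. -/
lemma sum_fin_add_div {p : ℕ} (hp : 0 < p) (y : ℕ) : ∑ a : Fin p, (y + a) / p = y := by
  rw [Fin.sum_univ_eq_sum_range (fun a => (y + a) / p) p]
  induction y with
  | zero => exact sum_eq_zero fun a ha => Nat.div_eq_of_lt (by simpa using ha)
  | succ y ih =>
    have h := (sum_range_succ (fun a => (y + a) / p) p).symm.trans
      (sum_range_succ' (fun a => (y + a) / p) p)
    simp only [ih, Nat.add_div_right _ hp, add_zero, ← add_assoc] at h
    simp only [add_right_comm y 1]
    omega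

section Padding

variable {ι σ : Type*} {p Q c : ℕ} {t : σ → ℕ}

/-- Lay the demands `t ℓ` out one after another from position `x` and deal them cyclically to
the `p` rows: row `a` takes the positions `w` with `p ∣ w + a + 1`. -/
lemma exists_cyclic_distribution (hp : 0 < p) (hcap : ∀ ℓ, t ℓ ≤ p * c) (s : Finset σ)
    (x : ℕ) :
    ∃ T : Fin p → σ → ℕ, (∀ a ℓ, T a ℓ ≤ c) ∧
      (∀ a : Fin p, ∑ ℓ ∈ s, T a ℓ = (x + ∑ ℓ ∈ s, t ℓ + a) / p - (x + a) / p) ∧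
      ∀ ℓ ∈ s, ∑ a, T a ℓ = t ℓ := by
  classical
  have mono : ∀ x y a, (x + a) / p ≤ (x + y + a) / p := fun x y a =>
    Nat.div_le_div_right (by omega)
  induction s using Finset.cons_induction generalizing x with
  | empty => exact ⟨0, fun _ _ => Nat.zero_le _, by simp, by simp⟩
  | cons ℓ₀ s hℓ₀ ih =>
    obtain ⟨T, hTc, hTrow, hTcol⟩ := ih (x + t ℓ₀)
    refine ⟨fun a ℓ => if ℓ = ℓ₀ then (x + t ℓ₀ + a) / p - (x + a) / p else T a ℓ,
      fun a ℓ => ?_, fun a => ?_, fun ℓ hℓ => ?_⟩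
    · dsimp only
      split_ifs
      · have : (x + a + t ℓ₀) / p ≤ (x + a + p * c) / p :=
          Nat.div_le_div_right (by have := hcap ℓ₀; omega)
        rw [Nat.add_mul_div_left _ _ hp, add_right_comm] at this
        omega
      · exact hTc a ℓ
    · have h₁ := mono x (t ℓ₀) a
      have h₂ := mono (x + t ℓ₀) (∑ ℓ ∈ s, t ℓ) a
      dsimp only
      rw [sum_cons, if_pos rfl, sum_congr rfl fun ℓ hℓ => if_neg (ne_of_mem_of_not_mem hℓ hℓ₀),
        hTrow, sum_cons, ← add_assoc x]
      omega
    · rcases mem_cons.1 hℓ with rfl | hℓ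
      · rw [sum_congr rfl fun a _ => if_pos rfl,
          sum_tsub_distrib _ fun (a : Fin p) _ => mono x (t ℓ) a,
          sum_fin_add_div hp, sum_fin_add_div hp, Nat.add_sub_cancel_left]
      · simp only [if_neg (ne_of_mem_of_not_mem hℓ hℓ₀), hTcol ℓ hℓ]

variable [Fintype ι] [Fintype σ]

lemma exists_matrix_of_colSum (hsum : ∑ ℓ, t ℓ = p * Q) (hcap : ∀ ℓ, t ℓ ≤ p * c) :
    ∃ T : Fin p → σ → ℕ, (∀ a ℓ, T a ℓ ≤ c) ∧ (∀ a, ∑ ℓ, T a ℓ = Q) ∧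
      ∀ ℓ, ∑ a, T a ℓ = t ℓ := by
  obtain rfl | hp := p.eq_zero_or_pos
  · exact ⟨finZeroElim, finZeroElim, finZeroElim, fun ℓ => by have := hcap ℓ; simp_all⟩
  obtain ⟨T, hTc, hTrow, hTcol⟩ := exists_cyclic_distribution hp hcap univ 0
  refine ⟨T, hTc, fun a => ?_, fun ℓ => hTcol ℓ (mem_univ ℓ)⟩
  rw [hTrow, hsum, zero_add, zero_add, add_comm, Nat.add_mul_div_left _ _ hp,
    Nat.add_sub_cancel_left]

lemma sum_tsub_sum_eq_mul {A : ι → σ → ℕ} {L : ℕ} (hle : ∀ ℓ, ∑ i, A i ℓ ≤ L)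
    (hsum : ∀ i, ∑ ℓ, A i ℓ = L) (hcard : Fintype.card ι + p = Fintype.card σ) :
    ∑ ℓ, (L - ∑ i, A i ℓ) = p * L := by
  rw [sum_tsub_distrib _ fun ℓ _ => hle ℓ, sum_comm]
  simp only [hsum, sum_const, card_univ, smul_eq_mul, ← hcard]
  rw [add_mul, Nat.add_sub_cancel_left]

lemma exists_padding {B : ι → σ → ℕ} (hrow : ∀ i, ∑ ℓ, B i ℓ = Q) (hcol : ∀ ℓ, ∑ i, B i ℓ ≤ Q)
    (hcard : Fintype.card ι + p = Fintype.card σ) (hQ : Q ≤ p * c) :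
    ∃ T : Fin p → σ → ℕ, (∀ a ℓ, T a ℓ ≤ c) ∧ (∀ a, ∑ ℓ, T a ℓ = Q) ∧
      ∀ ℓ, ∑ i, B i ℓ + ∑ a, T a ℓ = Q := by
  obtain ⟨T, hTc, hTrow, hTcol⟩ := exists_matrix_of_colSum (sum_tsub_sum_eq_mul hcol hrow hcard)
    fun ℓ => (Nat.sub_le _ _).trans hQ
  exact ⟨T, hTc, hTrow, fun ℓ => by rw [hTcol]; have := hcol ℓ; omega⟩

end Padding

section CyclicFill

variable {m : ℕ}

lemma card_filter_val_sub_lt (b : Fin m) {d : ℕ} (hd : d ≤ m) :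
    #{c : Fin m | (c - b).val < d} = d := by
  have : NeZero m := ⟨b.pos.ne'⟩
  rw [card_equiv (Equiv.subRight b) (t := {c : Fin m | c.val < d}) (by simp),
    Fin.card_filter_val_lt, min_eq_right hd]

lemma card_filter_val_sub_lt_le {s L : ℕ} {f : Fin s → Fin m} (hf : Injective f) (b : Fin m) :
    #{j | (b - f j).val < L} ≤ L := by
  have : NeZero m := ⟨b.pos.ne'⟩
  calc #{j | (b - f j).val < L} ≤ #(range L) :=
        card_le_card_of_injOn (fun j => (b - f j).val) (fun j hj => by simpa using hj)
          fun j _ j' _ h => hf (sub_right_injective (Fin.val_injective h))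
    _ = L := card_range L

/-- Cell `(i, j)` receives as many of the new symbols `i + j, i + j + 1, …` of `Fin m`
(cyclically) as it lacks. -/
lemma exists_cell_completion {σ : Type*} [Fintype σ] {r s L : ℕ} {M : Fin r → Fin s → σ → ℕ}
    (hcell : ∀ i j, ∑ ℓ, M i j ℓ ≤ L) (hrow : ∀ i ℓ, ∑ j, M i j ℓ ≤ L)
    (hcol : ∀ j ℓ, ∑ i, M i j ℓ ≤ L) (hle : ∀ i j ℓ, M i j ℓ ≤ 1)
    (hr : r ≤ m) (hs : s ≤ m) (hL : L ≤ m) :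
    ∃ F : Fin r → Fin s → σ ⊕ Fin m → ℕ, (∀ i j ℓ, F i j (.inl ℓ) = M i j ℓ) ∧
      (∀ i j, ∑ ℓ, F i j ℓ = L) ∧ (∀ i ℓ, ∑ j, F i j ℓ ≤ L) ∧
      (∀ j ℓ, ∑ i, F i j ℓ ≤ L) ∧ ∀ i j ℓ, F i j ℓ ≤ 1 := by
  refine ⟨fun i j => Sum.elim (M i j) fun c =>
      if (c - Fin.castLE hr i - Fin.castLE hs j).val < L - ∑ ℓ, M i j ℓ then 1 else 0,
    fun _ _ _ => rfl, fun i j => ?_, ?_, ?_, ?_⟩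
  · have : NeZero m := ⟨(i.pos.trans_le hr).ne'⟩
    simp only [Fintype.sum_sum_type, Sum.elim_inl, Sum.elim_inr, sum_boole, Nat.cast_id, sub_sub,
      card_filter_val_sub_lt _ ((Nat.sub_le _ _).trans hL)]
    have := hcell i j
    omega
  · rintro i (ℓ | c)
    · exact hrow i ℓ
    · refine (sum_le_sum fun j _ => ?_).trans ((sum_boole _ _).trans_le
        (card_filter_val_sub_lt_le (Fin.castLE_injective hs) (c - Fin.castLE hr i)))
      simp only [Sum.elim_inr]
      split_ifs <;> omega
  · rintro j (ℓ | c)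
    · exact hcol j ℓ
    · have : NeZero m := ⟨c.pos.ne'⟩
      refine (sum_le_sum fun i _ => ?_).trans ((sum_boole _ _).trans_le
        (card_filter_val_sub_lt_le (Fin.castLE_injective hr) (c - Fin.castLE hs j)))
      simp only [Sum.elim_inr, sub_right_comm c]
      split_ifs <;> omega
  · rintro i j (ℓ | c)
    · exact hle i j ℓ
    · simp only [Sum.elim_inr]
      split_ifs <;> omega

end CyclicFill

section LatinCompletion

variable {ι κ σ : Type*} [Fintype ι] [Fintype κ] [Fintype σ] {L : ℕ}

/-- Pad the missing copies `L - ∑ j, F i j ℓ` of each symbol in each row with `p` further rows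
to a matrix with all line sums `m * L`, and split it into the `m` new columns. -/
lemma exists_row_completion {m p : ℕ} {F : ι → κ → σ → ℕ}
    (hcell : ∀ i j, ∑ ℓ, F i j ℓ = L) (hrow : ∀ i ℓ, ∑ j, F i j ℓ ≤ L)
    (hcol : ∀ j ℓ, ∑ i, F i j ℓ ≤ L) (hle : ∀ i j ℓ, F i j ℓ ≤ 1)
    (hκ : Fintype.card κ + m = Fintype.card σ) (hι : Fintype.card ι + p = Fintype.card σ)
    (hιm : Fintype.card ι ≤ m) (hLm : L ≤ m) (hLp : L ≤ p) :
    ∃ A : ι → κ ⊕ Fin m → σ → ℕ, (∀ i j, A i (.inl j) = F i j) ∧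
      (∀ i j, ∑ ℓ, A i j ℓ = L) ∧ (∀ i ℓ, ∑ j, A i j ℓ = L) ∧
      (∀ j ℓ, ∑ i, A i j ℓ ≤ L) ∧ ∀ i j ℓ, A i j ℓ ≤ 1 := by
  set B : ι → σ → ℕ := fun i ℓ => L - ∑ j, F i j ℓ
  have hBrow : ∀ i, ∑ ℓ, B i ℓ = m * L := fun i =>
    sum_tsub_sum_eq_mul (A := fun j ℓ => F i j ℓ) (hrow i) (hcell i) hκ
  have hBcol : ∀ ℓ, ∑ i, B i ℓ ≤ m * L := fun ℓ =>
    (sum_le_sum fun i _ => Nat.sub_le _ _).trans (by simpa using Nat.mul_le_mul_right L hιm)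
  obtain ⟨T, hTc, hTrow, hTcol⟩ := exists_padding (c := m) hBrow hBcol hι
    (by rw [mul_comm p]; exact Nat.mul_le_mul_left m hLp)
  obtain ⟨x, hx1, hxrow, hxcol, hxsum⟩ := exists_zeroOne_decomposition (D := Sum.elim B T)
    (a := fun _ => L) (b := fun _ => L)
    (by rintro (i | a) ℓ; exacts [(Nat.sub_le _ _).trans hLm, hTc a ℓ])
    (by rintro (i | a); exacts [hBrow i, hTrow a])
    (fun ℓ => by simpa only [Fintype.sum_sum_type, Sum.elim_inl, Sum.elim_inr] using hTcol ℓ)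
  refine ⟨fun i => Sum.elim (F i) fun c => x c (.inl i), fun _ _ => rfl, ?_, fun i ℓ => ?_,
    ?_, ?_⟩
  · rintro i (j | c)
    exacts [hcell i j, hxrow c (.inl i)]
  · have := hxsum (.inl i) ℓ
    simp only [Fintype.sum_sum_type, Sum.elim_inl, Sum.elim_inr, B] at this ⊢
    have := hrow i ℓ
    omega
  · rintro (j | c) ℓ
    · exact hcol j ℓ
    · rw [← hxcol c ℓ, Fintype.sum_sum_type]
      exact le_self_add
  · rintro i (j | c) ℓ
    exacts [hle i j ℓ, hx1 c (.inl i) ℓ]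

structure IsSimpleLatin (L : ℕ) (N : ι → κ → σ → ℕ) : Prop where
  cell_sum : ∀ i j, ∑ ℓ, N i j ℓ = L
  row_sum : ∀ i ℓ, ∑ j, N i j ℓ = L
  col_sum : ∀ j ℓ, ∑ i, N i j ℓ = L
  le_one : ∀ i j ℓ, N i j ℓ ≤ 1

lemma IsSimpleLatin.comp_equiv {ι' κ' σ' : Type*} [Fintype ι'] [Fintype κ'] [Fintype σ']
    {N : ι → κ → σ → ℕ} (hN : IsSimpleLatin L N) (e₁ : ι' ≃ ι) (e₂ : κ' ≃ κ) (e₃ : σ' ≃ σ) :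
    IsSimpleLatin L fun i j ℓ => N (e₁ i) (e₂ j) (e₃ ℓ) :=
  ⟨fun _ _ => (e₃.sum_comp _).trans (hN.cell_sum _ _),
    fun i ℓ => (e₂.sum_comp (fun j => N (e₁ i) j (e₃ ℓ))).trans (hN.row_sum _ _),
    fun j ℓ => (e₁.sum_comp (fun i => N i (e₂ j) (e₃ ℓ))).trans (hN.col_sum _ _),
    fun _ _ _ => hN.le_one _ _ _⟩

/-- The missing copies `L - ∑ i, A i j ℓ` of each symbol in each column form a matrix with all
line sums `p * L`, which splits into the `p` new rows. -/
lemma exists_isSimpleLatin_of_rows {p : ℕ} {A : ι → κ → σ → ℕ}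
    (hcell : ∀ i j, ∑ ℓ, A i j ℓ = L) (hrow : ∀ i ℓ, ∑ j, A i j ℓ = L)
    (hcol : ∀ j ℓ, ∑ i, A i j ℓ ≤ L) (hle : ∀ i j ℓ, A i j ℓ ≤ 1)
    (hκ : Fintype.card ι + p = Fintype.card κ) (hσ : Fintype.card ι + p = Fintype.card σ)
    (hLp : L ≤ p) :
    ∃ N : ι ⊕ Fin p → κ → σ → ℕ, (∀ i, N (.inl i) = A i) ∧ IsSimpleLatin L N := by
  obtain ⟨x, hx1, hxrow, hxcol, hxsum⟩ := exists_zeroOne_decomposition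
    (a := fun _ => L) (b := fun _ => L) (fun j ℓ => (Nat.sub_le _ _).trans hLp)
    (fun j => sum_tsub_sum_eq_mul (A := fun i ℓ => A i j ℓ) (hcol j) (hcell · j) hσ)
    (fun ℓ => sum_tsub_sum_eq_mul (A := fun i j => A i j ℓ) (hcol · ℓ) (hrow · ℓ) hκ)
  refine ⟨Sum.elim A x, fun _ => rfl, ⟨?_, ?_, fun j ℓ => ?_, ?_⟩⟩
  · rintro (i | c) j
    exacts [hcell i j, hxrow c j]
  · rintro (i | c) ℓ
    exacts [hrow i ℓ, hxcol c ℓ]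
  · simp only [Fintype.sum_sum_type, Sum.elim_inl, Sum.elim_inr, hxsum]
    have := hcol j ℓ
    omega
  · rintro (i | c) j ℓ
    exacts [hle i j ℓ, hx1 c j ℓ]

end LatinCompletion

def finSumFinSubEquiv {a n : ℕ} (h : a ≤ n) : Fin a ⊕ Fin (n - a) ≃ Fin n :=
  finSumFinEquiv.trans (finCongr (Nat.add_sub_of_le h))

@[simp]
lemma finSumFinSubEquiv_symm_castLE {a n : ℕ} (h : a ≤ n) (i : Fin a) :
    (finSumFinSubEquiv h).symm (Fin.castLE h i) = .inl i := by
  rw [Equiv.symm_apply_eq]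
  ext
  simp [finSumFinSubEquiv]

/-- For λ ≤ k and n ≥ max(k+r, k+s, k+λ, r+s), any simple partial r×s λ-Latin
rectangle on [k] extends to a simple n×n λ-Latin square on [n]. -/
theorem stmt6 (r s n k L : ℕ) (hLk : L ≤ k)
    (h1 : k + r ≤ n) (h2 : k + s ≤ n) (h3 : k + L ≤ n) (h4 : r + s ≤ n)
    (M : Fin r → Fin s → Fin k → ℕ)
    (hMcell : ∀ i j, ∑ ℓ, M i j ℓ ≤ L)
    (hMrow : ∀ i ℓ, ∑ j, M i j ℓ ≤ L)
    (hMcol : ∀ j ℓ, ∑ i, M i j ℓ ≤ L)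
    (hMsimple : ∀ i j ℓ, M i j ℓ ≤ 1) :
    ∃ N : Fin n → Fin n → Fin n → ℕ,
      (∀ i j, ∑ ℓ, N i j ℓ = L) ∧
      (∀ i ℓ, ∑ j, N i j ℓ = L) ∧
      (∀ j ℓ, ∑ i, N i j ℓ = L) ∧
      (∀ i j ℓ, N i j ℓ ≤ 1) ∧
      (∀ i j ℓ, M i j ℓ ≤
        N (Fin.castLE (by omega) i) (Fin.castLE (by omega) j) (Fin.castLE (by omega) ℓ)) := by
  obtain ⟨F, hFM, hFcell, hFrow, hFcol, hFle⟩ := exists_cell_completion (m := n - k)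
    hMcell hMrow hMcol hMsimple (by omega) (by omega) (by omega)
  obtain ⟨A, hAF, hAcell, hArow, hAcol, hAle⟩ := exists_row_completion (m := n - s) (p := n - r)
    hFcell hFrow hFcol hFle (by simp; omega) (by simp; omega) (by simp; omega) (by omega)
    (by omega)
  obtain ⟨N, hNA, hN⟩ := exists_isSimpleLatin_of_rows (p := n - r)
    hAcell hArow hAcol hAle (by simp; omega) (by simp; omega) (by omega)
  obtain ⟨hcell, hrow, hcol, hle⟩ := hN.comp_equiv (finSumFinSubEquiv (a := r) (by omega)).symm
    (finSumFinSubEquiv (a := s) (by omega)).symm (finSumFinSubEquiv (a := k) (by omega)).symm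
  refine ⟨_, hcell, hrow, hcol, hle, fun i j ℓ => ?_⟩
  simp [hNA, hAF, hFM]
end

section
/- For n ≥ 2r and r ≥ λ, any simple partial r×r λ-Latin square on symbol set [r] can be extended to a simple n×n λ-Latin square on symbol set [n]. -/
/-!
Cell `(i, j)` of the `r × r` corner receives the fresh symbols `i + j + t` (modulo `m = n - r`)
for `t` below its deficiency. Since `j ↦ c - i - j` is injective, a fresh symbol `c` then occurs
at most `L` times in row `i`, and likewise in every column. What is still missing from the first
`r` rows is placed into `m` new columns, and what is still missing from the `n` columns into `m`
new rows. Both steps split a deficiency matrix with row sums `K * L`, column sums at most `K * L` and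
entries at most `K` into `K` simple layers with row sums `L` and column sums at most `L` (for the
new columns, `n ≥ 2r` bounds the column sums). Each layer rounds the fractional layer `D / K`:
a transportation problem with a fractional solution has an integral one, by the max-flow min-cut
argument.
-/

open Finset

section Cut

variable {ι κ : Type*} [Fintype κ] [DecidableEq ι] [DecidableEq κ]

/-- In the network source → rows → columns → sink with capacities `R x`, `u x y` and `C y`, the
cut with source side `{source} ∪ S ∪ V` has capacity `∑ x ∉ S, R x + cutCapacity C u S V`. -/
def cutCapacity (C : κ → ℕ) (u : ι → κ → ℕ) (S : Finset ι) (V : Finset κ) : ℕ :=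
  ∑ x ∈ S, ∑ y ∈ Vᶜ, u x y + ∑ y ∈ V, C y

lemma cutCapacity_union_add_inter_le (C : κ → ℕ) (u : ι → κ → ℕ) (S S' : Finset ι)
    (V V' : Finset κ) :
    cutCapacity C u (S ∪ S') (V ∪ V') + cutCapacity C u (S ∩ S') (V ∩ V') ≤
      cutCapacity C u S V + cutCapacity C u S' V' := by
  unfold cutCapacity
  simp only [← sum_product']
  have hu : ∑ p ∈ (S ∪ S') ×ˢ (V ∪ V')ᶜ, u p.1 p.2 + ∑ p ∈ (S ∩ S') ×ˢ (V ∩ V')ᶜ, u p.1 p.2 ≤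
      ∑ p ∈ S ×ˢ Vᶜ, u p.1 p.2 + ∑ p ∈ S' ×ˢ V'ᶜ, u p.1 p.2 := by
    rw [← sum_union_inter, ← sum_union_inter (s₁ := S ×ˢ Vᶜ)]
    gcongr ?_ + ?_ <;> refine sum_le_sum_of_subset fun p => ?_ <;>
      simp only [mem_union, mem_inter, mem_product, mem_compl] <;> tauto
  have hC := sum_union_inter (f := C) (s₁ := V) (s₂ := V')
  omega

lemma cutCapacity_add_unit (C : κ → ℕ) (u : ι → κ → ℕ) (x₀ : ι) (y₀ : κ) (S : Finset ι)
    (V : Finset κ) :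
    cutCapacity (fun y => C y + if y = y₀ then 1 else 0)
        (fun x y => u x y + if x = x₀ ∧ y = y₀ then 1 else 0) S V =
      cutCapacity C u S V + (if x₀ ∈ S ∧ y₀ ∉ V then 1 else 0) + if y₀ ∈ V then 1 else 0 := by
  have hunit : ∑ x ∈ S, ∑ y ∈ Vᶜ, (if x = x₀ ∧ y = y₀ then 1 else 0) =
      if x₀ ∈ S ∧ y₀ ∉ V then 1 else 0 := by
    simp [ite_and, sum_ite_eq']
  simp only [cutCapacity, sum_add_distrib, hunit, sum_ite_eq']
  omega

variable (R : ι → ℕ) (C : κ → ℕ) (u : ι → κ → ℕ)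

def IsTightCut (S : Finset ι) (V : Finset κ) : Prop :=
  cutCapacity C u S V ≤ ∑ x ∈ S, R x

variable {R C u}

lemma IsTightCut.union (hcut : ∀ S V, ∑ x ∈ S, R x ≤ cutCapacity C u S V)
    {S S' : Finset ι} {V V' : Finset κ} (h : IsTightCut R C u S V) (h' : IsTightCut R C u S' V') :
    IsTightCut R C u (S ∪ S') (V ∪ V') := by
  have := cutCapacity_union_add_inter_le C u S S' V V'
  have := hcut (S ∩ S') (V ∩ V')
  have := sum_union_inter (f := R) (s₁ := S) (s₂ := S')
  unfold IsTightCut at *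
  omega

lemma exists_isTightCut_forall_subset [Fintype ι]
    (hcut : ∀ S V, ∑ x ∈ S, R x ≤ cutCapacity C u S V) (x₀ : ι) :
    ∃ S₁ V₁, x₀ ∉ S₁ ∧ IsTightCut R C u S₁ V₁ ∧
      ∀ S V, x₀ ∉ S → IsTightCut R C u S V → V ⊆ V₁ := by
  classical
  let P : Finset ι × Finset κ → Prop := fun p => x₀ ∉ p.1 ∧ IsTightCut R C u p.1 p.2
  let T := ({p | P p} : Finset _)
  have hT : P (T.sup id) := by
    refine sup_induction (p := P) ⟨notMem_empty x₀, by simp [IsTightCut, cutCapacity]⟩ ?_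
      (fun p hp => (mem_filter.mp hp).2)
    rintro ⟨S, V⟩ ⟨hS, h⟩ ⟨S', V'⟩ ⟨hS', h'⟩
    exact ⟨by simp [hS, hS'], h.union hcut h'⟩
  refine ⟨_, _, hT.1, hT.2, fun S V hS h => ?_⟩
  exact (le_sup (f := id) (mem_filter.mpr ⟨mem_univ _, hS, h⟩) : (S, V) ≤ T.sup id).2

lemma exists_forall_lt_cutCapacity [Fintype ι]
    (hcut : ∀ S V, ∑ x ∈ S, R x ≤ cutCapacity C u S V) {x₀ : ι} (hx₀ : R x₀ ≠ 0) :
    ∃ y₀, u x₀ y₀ ≠ 0 ∧ C y₀ ≠ 0 ∧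
      ∀ S V, x₀ ∉ S → y₀ ∈ V → ∑ x ∈ S, R x < cutCapacity C u S V := by
  obtain ⟨S₁, V₁, hx₀S₁, htight, hmax⟩ := exists_isTightCut_forall_subset hcut x₀
  -- adding the columns of zero demand keeps the cut tight and will force `C y₀ ≠ 0`
  set V₂ := V₁ ∪ ({y | C y = 0} : Finset κ)
  have htight₂ : cutCapacity C u S₁ V₂ ≤ ∑ x ∈ S₁, R x := by
    refine le_trans (add_le_add ?_ (sum_union_eq_left fun y hy _ => by simpa using hy).le) htight
    exact sum_le_sum fun x _ => sum_le_sum_of_subset (compl_subset_compl.mpr subset_union_left)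
  obtain ⟨y₀, hy₀, hu⟩ : ∃ y₀ ∉ V₂, u x₀ y₀ ≠ 0 := by
    by_contra! h
    have hzero : ∑ y ∈ V₂ᶜ, u x₀ y = 0 := sum_eq_zero fun y hy => h y (mem_compl.mp hy)
    have := hcut (insert x₀ S₁) V₂
    simp only [cutCapacity, sum_insert hx₀S₁, hzero] at this htight₂
    omega
  refine ⟨y₀, hu, fun h => hy₀ (mem_union_right _ (by simpa using h)), fun S V hS hV => ?_⟩
  by_contra! h
  exact hy₀ (mem_union_left _ (hmax S V hS h hV))

theorem exists_transport_of_cut [Fintype ι] (htot : ∑ x, R x = ∑ y, C y)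
    (hcut : ∀ S V, ∑ x ∈ S, R x ≤ cutCapacity C u S V) :
    ∃ X : ι → κ → ℕ, (∀ x y, X x y ≤ u x y) ∧ (∀ x, ∑ y, X x y = R x) ∧
      ∀ y, ∑ x, X x y = C y := by
  obtain ⟨N, hN⟩ : ∃ N, ∑ x, R x = N := ⟨_, rfl⟩
  induction N generalizing R C u with
  | zero =>
    have hR := sum_eq_zero_iff.mp hN
    have hC := sum_eq_zero_iff.mp (htot ▸ hN)
    exact ⟨0, fun _ _ => Nat.zero_le _, fun x => by simp [hR x], fun y => by simp [hC y]⟩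
  | succ N ih =>
    obtain ⟨x₀, hx₀⟩ : ∃ x₀, R x₀ ≠ 0 := by
      by_contra! h
      simp [h] at hN
    obtain ⟨y₀, huy₀, hCy₀, hstrict⟩ := exists_forall_lt_cutCapacity hcut hx₀
    -- remove one unit of flow along the edge `(x₀, y₀)`
    obtain ⟨R, rfl⟩ : ∃ R', R = fun x => R' x + if x = x₀ then 1 else 0 :=
      ⟨fun x => R x - if x = x₀ then 1 else 0, funext fun x => by split_ifs <;> grind⟩
    obtain ⟨C, rfl⟩ : ∃ C', C = fun y => C' y + if y = y₀ then 1 else 0 :=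
      ⟨fun y => C y - if y = y₀ then 1 else 0, funext fun y => by split_ifs <;> grind⟩
    obtain ⟨u, rfl⟩ : ∃ u', u = fun x y => u' x y + if x = x₀ ∧ y = y₀ then 1 else 0 :=
      ⟨fun x y => u x y - if x = x₀ ∧ y = y₀ then 1 else 0,
        funext₂ fun x y => by
          dsimp only
          split_ifs with h
          · obtain ⟨rfl, rfl⟩ := h
            omega
          · simp⟩
    simp only [sum_add_distrib, sum_ite_eq', mem_univ, if_true, cutCapacity_add_unit]
      at hN htot hcut hstrict
    -- only the cuts with `x₀ ∉ S` and `y₀ ∈ V` lose capacity but no demand; they were not tight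
    have hcut' : ∀ S V, ∑ x ∈ S, R x ≤ cutCapacity C u S V := fun S V => by
      have := hcut S V
      have := hstrict S V
      split_ifs at * <;> grind
    obtain ⟨X, hXu, hXrow, hXcol⟩ := ih (by omega) hcut' (by omega)
    refine ⟨fun x y => X x y + if x = x₀ ∧ y = y₀ then 1 else 0, fun x y => ?_, fun x => ?_,
      fun y => ?_⟩
    · exact add_le_add_left (hXu x y) _
    · simp [sum_add_distrib, hXrow, ite_and]
    · simp [sum_add_distrib, hXcol, ite_and]

end Cut

section Rounding

variable {ι κ : Type*} [Fintype ι] [Fintype κ]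

theorem exists_transport_of_scaled {R : ι → ℕ} {C : κ → ℕ} {u : ι → κ → ℕ} {K : ℕ}
    (hK : 0 < K) (W : ι → κ → ℕ) (hWu : ∀ x y, W x y ≤ K * u x y)
    (hrow : ∀ x, ∑ y, W x y = K * R x) (hcol : ∀ y, ∑ x, W x y = K * C y) :
    ∃ X : ι → κ → ℕ, (∀ x y, X x y ≤ u x y) ∧ (∀ x, ∑ y, X x y = R x) ∧
      ∀ y, ∑ x, X x y = C y := by
  classical
  refine exists_transport_of_cut (Nat.eq_of_mul_eq_mul_left hK ?_) fun S V => ?_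
  · simp only [mul_sum, ← hrow, ← hcol]
    exact sum_comm
  refine Nat.le_of_mul_le_mul_left ?_ hK
  calc K * ∑ x ∈ S, R x = ∑ x ∈ S, ∑ y ∈ Vᶜ, W x y + ∑ y ∈ V, ∑ x ∈ S, W x y := by
        simp only [mul_sum, ← hrow, ← sum_add_sum_compl V, sum_add_distrib]
        rw [sum_comm, add_comm]
    _ ≤ ∑ x ∈ S, ∑ y ∈ Vᶜ, K * u x y + ∑ y ∈ V, ∑ x, W x y := by
        gcongr with x _ y _ y _
        · exact hWu x y
        · exact subset_univ S
    _ = K * cutCapacity C u S V := by simp only [cutCapacity, hcol, mul_add, mul_sum]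

theorem exists_transport_of_scaled_col_bounds {R : ι → ℕ} {lo hi : κ → ℕ}
    {u : ι → κ → ℕ} {K : ℕ} (hK : 0 < K) (W : ι → κ → ℕ) (hWu : ∀ x y, W x y ≤ K * u x y)
    (hrow : ∀ x, ∑ y, W x y = K * R x) (hlo : ∀ y, K * lo y ≤ ∑ x, W x y)
    (hhi : ∀ y, ∑ x, W x y ≤ K * hi y) :
    ∃ X : ι → κ → ℕ, (∀ x y, X x y ≤ u x y) ∧ (∀ x, ∑ y, X x y = R x) ∧
      ∀ y, lo y ≤ ∑ x, X x y ∧ ∑ x, X x y ≤ hi y := by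
  -- a dummy row `none` absorbs the slack `hi y - ∑ x, X x y` of every column
  have hsum : ∑ y, ∑ x, W x y = K * ∑ x, R x := by rw [sum_comm, mul_sum]; simp only [hrow]
  obtain ⟨X, hXu, hXrow, hXcol⟩ := exists_transport_of_scaled (ι := Option ι) hK
    (R := fun z => z.elim (∑ y, hi y - ∑ x, R x) R) (C := hi)
    (u := fun z y => z.elim (hi y - lo y) (u · y))
    (fun z y => z.elim (K * hi y - ∑ x, W x y) (W · y))
    (Option.forall.mpr ⟨fun y => by
      simp only [Option.elim_none, mul_tsub]; exact tsub_le_tsub_left (hlo y) _, hWu⟩)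
    (Option.forall.mpr ⟨by
      simp only [Option.elim_none, sum_tsub_distrib _ fun y _ => hhi y, hsum, mul_tsub, mul_sum],
      hrow⟩)
    (fun y => by simp [Fintype.sum_option, tsub_add_cancel_of_le (hhi y)])
  refine ⟨fun x y => X (some x) y, fun x y => hXu (some x) y, fun x => hXrow (some x),
    fun y => ?_⟩
  have hcol := hXcol y
  have hnone := hXu none y
  rw [Fintype.sum_option] at hcol
  have : lo y ≤ hi y := Nat.le_of_mul_le_mul_left ((hlo y).trans (hhi y)) hK
  simp only [Option.elim_none] at hcol hnone
  dsimp only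
  omega

theorem exists_transport_of_scaled_bounds {R : ι → ℕ} {lo hi : κ → ℕ}
    {l u : ι → κ → ℕ} {K : ℕ} (hK : 0 < K) (W : ι → κ → ℕ) (hlW : ∀ x y, K * l x y ≤ W x y)
    (hWu : ∀ x y, W x y ≤ K * u x y) (hrow : ∀ x, ∑ y, W x y = K * R x)
    (hlo : ∀ y, K * lo y ≤ ∑ x, W x y) (hhi : ∀ y, ∑ x, W x y ≤ K * hi y) :
    ∃ X : ι → κ → ℕ, (∀ x y, l x y ≤ X x y ∧ X x y ≤ u x y) ∧ (∀ x, ∑ y, X x y = R x) ∧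
      ∀ y, lo y ≤ ∑ x, X x y ∧ ∑ x, X x y ≤ hi y := by
  have hrowl : ∀ x, ∑ y, l x y ≤ R x := fun x => Nat.le_of_mul_le_mul_left
    (by rw [mul_sum, ← hrow]; exact sum_le_sum fun y _ => hlW x y) hK
  have hcoll : ∀ y, ∑ x, (W x y - K * l x y) = ∑ x, W x y - K * ∑ x, l x y := fun y => by
    rw [sum_tsub_distrib _ fun x _ => hlW x y, mul_sum]
  have hcoll_le : ∀ y, ∑ x, l x y ≤ hi y := fun y => Nat.le_of_mul_le_mul_left
    ((by rw [mul_sum]; exact sum_le_sum fun x _ => hlW x y : _ ≤ ∑ x, W x y).trans (hhi y)) hK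
  obtain ⟨X, hXu, hXrow, hXcol⟩ := exists_transport_of_scaled_col_bounds
    (R := fun x => R x - ∑ y, l x y) (lo := fun y => lo y - ∑ x, l x y)
    (hi := fun y => hi y - ∑ x, l x y) (u := fun x y => u x y - l x y) hK
    (fun x y => W x y - K * l x y)
    (fun x y => by rw [mul_tsub]; exact tsub_le_tsub_right (hWu x y) _)
    (fun x => by rw [sum_tsub_distrib _ fun y _ => hlW x y, hrow, mul_tsub, mul_sum])
    (fun y => by rw [hcoll, mul_tsub]; exact tsub_le_tsub_right (hlo y) _)
    (fun y => by rw [hcoll, mul_tsub]; exact tsub_le_tsub_right (hhi y) _)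
  refine ⟨fun x y => X x y + l x y, fun x y => ⟨le_add_self, ?_⟩, fun x => ?_, fun y => ?_⟩
  · have := hXu x y
    have : l x y ≤ u x y := Nat.le_of_mul_le_mul_left ((hlW x y).trans (hWu x y)) hK
    dsimp only at *
    omega
  · have := hXrow x
    have := hrowl x
    simp only [sum_add_distrib] at *
    omega
  · have := hXcol y
    have := hcoll_le y
    simp only [sum_add_distrib] at *
    omega

end Rounding

section Layers

variable {ι κ : Type*} [Fintype ι] [Fintype κ]

lemma mul_tsub_pred_mul_le {K L s : ℕ} (h : s ≤ K * L) : K * (s - (K - 1) * L) ≤ s := by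
  obtain _ | k := K
  · simp
  rcases le_total s (k * L) with hs | hs
  · simp [Nat.sub_eq_zero_of_le hs]
  · obtain ⟨t, rfl⟩ := Nat.exists_eq_add_of_le hs
    simp only [add_tsub_cancel_right, add_tsub_cancel_left] at h ⊢
    nlinarith

theorem exists_layer {K L : ℕ} (hK : 0 < K) (D : ι → κ → ℕ) (hrow : ∀ x, ∑ y, D x y = K * L)
    (hD : ∀ x y, D x y ≤ K) (hcol : ∀ y, ∑ x, D x y ≤ K * L) :
    ∃ X : ι → κ → ℕ, (∀ x y, X x y ≤ 1) ∧ (∀ x y, X x y ≤ D x y ∧ D x y ≤ X x y + (K - 1)) ∧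
      (∀ x, ∑ y, X x y = L) ∧ (∀ y, ∑ x, X x y ≤ L) ∧
      ∀ y, ∑ x, D x y ≤ ∑ x, X x y + (K - 1) * L := by
  -- `D / K` is a fractional layer; round it, forcing the entries with `D = K`
  obtain ⟨X, hX, hXrow, hXcol⟩ := exists_transport_of_scaled_bounds hK D
    (l := fun x y => if D x y = K then 1 else 0) (u := fun x y => if D x y = 0 then 0 else 1)
    (lo := fun y => ∑ x, D x y - (K - 1) * L) (hi := fun _ => L)
    (fun x y => by split_ifs <;> omega) (fun x y => by have := hD x y; split_ifs <;> omega)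
    hrow (fun y => mul_tsub_pred_mul_le (hcol y)) hcol
  refine ⟨X, fun x y => ?_, fun x y => ?_, hXrow, fun y => (hXcol y).2, fun y => ?_⟩
  · have := hX x y
    split_ifs at this <;> omega
  · obtain ⟨h₁, h₂⟩ := hX x y
    have := hD x y
    split_ifs at h₁ h₂ <;> omega
  · have := (hXcol y).1
    omega

theorem exists_layer_decomposition {K L : ℕ} (D : ι → κ → ℕ) (hrow : ∀ x, ∑ y, D x y = K * L)
    (hD : ∀ x y, D x y ≤ K) (hcol : ∀ y, ∑ x, D x y ≤ K * L) :
    ∃ Y : Fin K → ι → κ → ℕ, (∀ k x y, Y k x y ≤ 1) ∧ (∀ k x, ∑ y, Y k x y = L) ∧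
      (∀ k y, ∑ x, Y k x y ≤ L) ∧ ∀ x y, ∑ k, Y k x y = D x y := by
  induction K generalizing D with
  | zero =>
    refine ⟨fun k => k.elim0, fun k => k.elim0, fun k => k.elim0, fun k => k.elim0, fun x y => ?_⟩
    have := hD x y
    simp only [univ_eq_empty, sum_empty]
    omega
  | succ K ih =>
    obtain ⟨X, hX1, hXD, hXrow, hXcol, hDcol⟩ := exists_layer K.succ_pos D hrow hD hcol
    have hrow' : ∀ x, ∑ y, (D x y - X x y) = K * L := fun x => by
      rw [sum_tsub_distrib _ fun y _ => (hXD x y).1, hrow, hXrow, add_one_mul,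
        add_tsub_cancel_right]
    have hcol' : ∀ y, ∑ x, (D x y - X x y) ≤ K * L := fun y => by
      rw [sum_tsub_distrib _ fun x _ => (hXD x y).1]
      have := hDcol y
      rw [Nat.succ_sub_one] at this
      omega
    obtain ⟨Y, hY1, hYrow, hYcol, hYsum⟩ :=
      ih (fun x y => D x y - X x y) hrow' (fun x y => by have := hXD x y; omega) hcol'
    refine ⟨Fin.cons X Y, Fin.cases hX1 hY1, Fin.cases hXrow hYrow, Fin.cases hXcol hYcol,
      fun x y => ?_⟩
    rw [Fin.sum_univ_succ]
    simp only [Fin.cons_zero, Fin.cons_succ, hYsum]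
    have := hXD x y
    omega

end Layers

section CyclicFill

variable {m : ℕ} [NeZero m]

lemma sum_ite_sub_val_lt (a : Fin m) {d : ℕ} (hd : d ≤ m) :
    ∑ c : Fin m, (if (c - a).val < d then 1 else 0) = d := by
  have := (Equiv.subRight a).sum_comp (fun b : Fin m => if b.val < d then 1 else 0)
  simp only [Equiv.subRight_apply] at this
  rw [this, sum_boole, Nat.cast_id, Fin.card_filter_val_lt, min_eq_right hd]

lemma sum_ite_sub_val_lt_le {α : Type*} [Fintype α] {g : α → Fin m}
    (hg : Function.Injective g) (c : Fin m) {d : α → ℕ} {L : ℕ} (hd : ∀ a, d a ≤ L) :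
    ∑ a, (if (c - g a).val < d a then 1 else 0) ≤ L := by
  rw [sum_boole, Nat.cast_id, ← card_range L]
  refine card_le_card_of_injOn (fun a => (c - g a).val) (fun a ha => ?_) fun a _ b _ hab => ?_
  · simp only [coe_filter, Set.mem_ofPred_eq, coe_range, Set.mem_Iio] at ha ⊢
    exact ha.2.trans_le (hd a)
  · exact hg (sub_right_injective (Fin.val_injective hab))

end CyclicFill

structure IsLatinRectangle {ι κ σ : Type*} [Fintype ι] [Fintype κ] [Fintype σ] (L : ℕ)
    (P : ι → κ → σ → ℕ) : Prop where
  cell_sum : ∀ i j, ∑ ℓ, P i j ℓ = L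
  row_sum : ∀ i ℓ, ∑ j, P i j ℓ = L
  col_sum_le : ∀ j ℓ, ∑ i, P i j ℓ ≤ L
  le_one : ∀ i j ℓ, P i j ℓ ≤ 1

lemma sum_const_tsub {σ : Type*} [Fintype σ] {f : σ → ℕ} {L : ℕ} (h : ∀ ℓ, f ℓ ≤ L) :
    ∑ ℓ, (L - f ℓ) = Fintype.card σ * L - ∑ ℓ, f ℓ := by
  rw [sum_tsub_distrib _ fun ℓ _ => h ℓ, sum_const, card_univ, smul_eq_mul]

section Completion

variable {r m L : ℕ}

theorem exists_cell_completion_s7 [NeZero m] (hLm : L ≤ m) (hrm : r ≤ m)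
    (M : Fin r → Fin r → Fin r → ℕ) (hMcell : ∀ i j, ∑ ℓ, M i j ℓ ≤ L) (hMrow : ∀ i ℓ, ∑ j, M i j ℓ ≤ L)
    (hMcol : ∀ j ℓ, ∑ i, M i j ℓ ≤ L) (hMsimple : ∀ i j ℓ, M i j ℓ ≤ 1) :
    ∃ T : Fin r → Fin r → Fin (r + m) → ℕ, (∀ i j, ∑ ℓ, T i j ℓ = L) ∧
      (∀ i ℓ, ∑ j, T i j ℓ ≤ L) ∧ (∀ j ℓ, ∑ i, T i j ℓ ≤ L) ∧ (∀ i j ℓ, T i j ℓ ≤ 1) ∧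
      ∀ i j ℓ, T i j (Fin.castAdd m ℓ) = M i j ℓ := by
  let φ : Fin r → Fin r → Fin m := fun i j => Fin.castLE hrm i + Fin.castLE hrm j
  let d : Fin r → Fin r → ℕ := fun i j => L - ∑ ℓ, M i j ℓ
  have hd : ∀ i j, d i j ≤ L := fun i j => tsub_le_self
  refine ⟨fun i j => Fin.addCases (M i j) fun c => if (c - φ i j).val < d i j then 1 else 0,
    fun i j => ?_, fun i => Fin.addCases (fun ℓ => ?_) fun c => ?_,
    fun j => Fin.addCases (fun ℓ => ?_) fun c => ?_,
    fun i j => Fin.addCases (fun ℓ => ?_) fun c => ?_, fun i j ℓ => Fin.addCases_left ℓ⟩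
  · rw [Fin.sum_univ_add]
    simp only [Fin.addCases_left, Fin.addCases_right]
    rw [sum_ite_sub_val_lt _ ((hd i j).trans hLm)]
    exact add_tsub_cancel_of_le (hMcell i j)
  · simpa only [Fin.addCases_left] using hMrow i ℓ
  · simp only [Fin.addCases_right]
    exact sum_ite_sub_val_lt_le (fun j j' h => Fin.castLE_injective hrm (add_left_cancel h)) c
      (hd i)
  · simpa only [Fin.addCases_left] using hMcol j ℓ
  · simp only [Fin.addCases_right]
    exact sum_ite_sub_val_lt_le (fun i i' h => Fin.castLE_injective hrm (add_right_cancel h)) c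
      (hd · j)
  · simpa only [Fin.addCases_left] using hMsimple i j ℓ
  · simp only [Fin.addCases_right]
    split_ifs <;> omega

theorem exists_isLatinRectangle_extension [NeZero m] (hLm : L ≤ m) (hrm : r ≤ m)
    (M : Fin r → Fin r → Fin r → ℕ) (hMcell : ∀ i j, ∑ ℓ, M i j ℓ ≤ L)
    (hMrow : ∀ i ℓ, ∑ j, M i j ℓ ≤ L) (hMcol : ∀ j ℓ, ∑ i, M i j ℓ ≤ L)
    (hMsimple : ∀ i j ℓ, M i j ℓ ≤ 1) :
    ∃ P : Fin r → Fin (r + m) → Fin (r + m) → ℕ, IsLatinRectangle L P ∧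
      ∀ i j ℓ, P i (Fin.castAdd m j) (Fin.castAdd m ℓ) = M i j ℓ := by
  obtain ⟨T, hTcell, hTrow, hTcol, hT1, hTM⟩ :=
    exists_cell_completion_s7 hLm hrm M hMcell hMrow hMcol hMsimple
  have hdef : ∀ i, ∑ ℓ, (L - ∑ j, T i j ℓ) = m * L := fun i => by
    rw [sum_const_tsub (hTrow i), sum_comm]
    simp [hTcell, add_mul]
  have hdef_col : ∀ ℓ, ∑ i, (L - ∑ j, T i j ℓ) ≤ m * L := fun ℓ =>
    (sum_le_sum fun i _ => tsub_le_self).trans (by simpa using Nat.mul_le_mul_right L hrm)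
  obtain ⟨Y, hY1, hYrow, hYcol, hYsum⟩ :=
    exists_layer_decomposition _ hdef (fun _ _ => tsub_le_self.trans hLm) hdef_col
  refine ⟨fun i => Fin.addCases (T i) fun k => Y k i, ⟨fun i j => ?_, fun i ℓ => ?_,
    fun j ℓ => ?_, fun i j ℓ => ?_⟩, fun i j ℓ => by simp [hTM]⟩
  · induction j using Fin.addCases <;> simp [hTcell, hYrow]
  · rw [Fin.sum_univ_add]
    simp only [Fin.addCases_left, Fin.addCases_right, hYsum]
    exact add_tsub_cancel_of_le (hTrow i ℓ)
  · induction j using Fin.addCases <;> simp [hTcol, hYcol]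
  · induction j using Fin.addCases <;> simp [hT1, hY1]

theorem IsLatinRectangle.exists_completion {κ σ : Type*} [Fintype κ] [Fintype σ]
    {P : Fin r → κ → σ → ℕ} (hP : IsLatinRectangle L P) (hκ : Fintype.card κ = r + m)
    (hσ : Fintype.card σ = r + m) (hLm : L ≤ m) :
    ∃ N : Fin (r + m) → κ → σ → ℕ, IsLatinRectangle L N ∧ (∀ j ℓ, ∑ i, N i j ℓ = L) ∧
      ∀ i, N (Fin.castAdd m i) = P i := by
  have hdef : ∀ j, ∑ ℓ, (L - ∑ i, P i j ℓ) = m * L := fun j => by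
    rw [sum_const_tsub (hP.col_sum_le j), sum_comm]
    simp [hP.cell_sum, hσ, add_mul]
  have hdef_col : ∀ ℓ, ∑ j, (L - ∑ i, P i j ℓ) = m * L := fun ℓ => by
    rw [sum_const_tsub (hP.col_sum_le · ℓ), sum_comm]
    simp [hP.row_sum, hκ, add_mul]
  obtain ⟨Z, hZ1, hZcell, hZrow, hZsum⟩ := exists_layer_decomposition _ hdef
    (fun _ _ => tsub_le_self.trans hLm) fun ℓ => (hdef_col ℓ).le
  have hZrow_eq : ∀ k ℓ, ∑ j, Z k j ℓ = L := fun k ℓ =>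
    (sum_eq_sum_iff_of_le fun k _ => hZrow k ℓ).mp
      (by simp [sum_comm (s := univ (α := Fin m)), hZsum, hdef_col]) k (mem_univ k)
  have hcol : ∀ j ℓ, ∑ i, Fin.addCases P Z i j ℓ = L := fun j ℓ => by
    rw [Fin.sum_univ_add]
    simp only [Fin.addCases_left, Fin.addCases_right, hZsum]
    rw [add_tsub_cancel_of_le (hP.col_sum_le j ℓ)]
  refine ⟨Fin.addCases P Z, ⟨fun i j => ?_, fun i ℓ => ?_, fun j ℓ => (hcol j ℓ).le,
    fun i j ℓ => ?_⟩, hcol, fun i => Fin.addCases_left i⟩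
  · induction i using Fin.addCases <;> simp [hP.cell_sum, hZcell]
  · induction i using Fin.addCases <;> simp [hP.row_sum, hZrow_eq]
  · induction i using Fin.addCases <;> simp [hP.le_one, hZ1]

end Completion

/-- For n ≥ 2r and r ≥ λ, any simple partial r×r λ-Latin square on [r]
extends to a simple n×n λ-Latin square on [n]. -/
theorem stmt7 (r n L : ℕ) (hL : 1 ≤ L) (hrL : L ≤ r) (hn : 2 * r ≤ n)
    (M : Fin r → Fin r → Fin r → ℕ)
    (hMcell : ∀ i j, ∑ ℓ, M i j ℓ ≤ L)
    (hMrow : ∀ i ℓ, ∑ j, M i j ℓ ≤ L)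
    (hMcol : ∀ j ℓ, ∑ i, M i j ℓ ≤ L)
    (hMsimple : ∀ i j ℓ, M i j ℓ ≤ 1) :
    ∃ N : Fin n → Fin n → Fin n → ℕ,
      (∀ i j, ∑ ℓ, N i j ℓ = L) ∧
      (∀ i ℓ, ∑ j, N i j ℓ = L) ∧
      (∀ j ℓ, ∑ i, N i j ℓ = L) ∧
      (∀ i j ℓ, N i j ℓ ≤ 1) ∧
      (∀ i j ℓ, M i j ℓ ≤
        N (Fin.castLE (by omega) i) (Fin.castLE (by omega) j) (Fin.castLE (by omega) ℓ)) := by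
  obtain ⟨m, rfl⟩ : ∃ m, n = r + m := ⟨n - r, by omega⟩
  have : NeZero m := ⟨by omega⟩
  obtain ⟨P, hP, hPM⟩ :=
    exists_isLatinRectangle_extension (m := m) (by omega) (by omega) M hMcell hMrow hMcol hMsimple
  obtain ⟨N, hN, hNcol, hNP⟩ := hP.exists_completion (by simp) (by simp) (by omega : L ≤ m)
  refine ⟨N, hN.cell_sum, hN.row_sum, hNcol, hN.le_one, fun i j ℓ => ?_⟩
  exact (congrFun₂ (hNP i) _ _).trans (hPM i j ℓ) |>.ge
end

section
/- (Ore's f-factor theorem for bipartite multigraphs) A bipartite multigraph G with parts X and Y has an f-factor if and only if f(X) = f(Y) and for every A ⊆ Y, Σ_{y ∈ Y\A} f(y) ≥ Σ_{u ∈ X} max(0, f(u) − mult_G(u, A)), where mult_G(u, A) is the number of edges from u to vertices in A. -/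
open Finset

private lemma key8 {X Y : Type*} [Fintype X] [Fintype Y] [DecidableEq X] [DecidableEq Y]
    (n : ℕ) : ∀ (mult : X → Y → ℕ) (f : X → ℕ) (g : Y → ℕ),
    ∑ x, f x = n → ∑ x, f x = ∑ y, g y →
    (∀ A : Finset Y, ∑ u, (f u - ∑ y ∈ A, mult u y) ≤ ∑ y ∈ Aᶜ, g y) →
    ∃ F : X → Y → ℕ,
      (∀ x y, F x y ≤ mult x y) ∧ (∀ x, ∑ y, F x y = f x) ∧ (∀ y, ∑ x, F x y = g y) := by
  induction n with
  | zero =>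
    intro mult f g hn hfg _
    refine ⟨fun _ _ => 0, fun _ _ => Nat.zero_le _, ?_, ?_⟩
    · intro x
      have h1 := Finset.single_le_sum (f := f) (fun i _ => Nat.zero_le _) (Finset.mem_univ x)
      simpa using by omega
    · intro y
      have h1 := Finset.single_le_sum (f := g) (fun i _ => Nat.zero_le _) (Finset.mem_univ y)
      have : ∑ y, g y = 0 := by omega
      have h2 : g y = 0 := by omega
      simp [h2]
  | succ n ih =>
    intro mult f g hn hfg hA
    -- find x with f x > 0
    obtain ⟨x, hxpos⟩ : ∃ x, 0 < f x := by
      by_contra h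
      push_neg at h
      have : ∑ x, f x = 0 := Finset.sum_eq_zero fun x _ => Nat.le_zero.mp (h x)
      omega
    set P : Finset Y → Prop := fun A =>
      (∑ u, (f u - ∑ y ∈ A, mult u y) = ∑ y ∈ Aᶜ, g y) ∧ f x ≤ ∑ y ∈ A, mult x y with hP
    have hPuniv : P Finset.univ := by
      have h0 := hA Finset.univ
      rw [Finset.compl_univ, Finset.sum_empty] at h0
      have hz : ∀ u, f u - ∑ y, mult u y = 0 := by
        intro u
        have h1 : f u - ∑ y, mult u y ≤ ∑ u', (f u' - ∑ y, mult u' y) :=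
          Finset.single_le_sum (f := fun u' => f u' - ∑ y, mult u' y)
            (fun i _ => Nat.zero_le _) (Finset.mem_univ u)
        omega
      constructor
      · rw [Finset.compl_univ, Finset.sum_empty]
        exact Finset.sum_eq_zero fun u _ => hz u
      · have := hz x; omega
    have hPinter : ∀ A B, P A → P B → P (A ∩ B) := by
      rintro A B ⟨hAt, hAs⟩ ⟨hBt, hBs⟩
      have key1 : ∀ u ∈ Finset.univ,
          (f u - ∑ y ∈ A, mult u y) + (f u - ∑ y ∈ B, mult u y) ≤
          (f u - ∑ y ∈ A ∩ B, mult u y) + (f u - ∑ y ∈ A ∪ B, mult u y) := by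
        intro u _
        have h1 : (∑ y ∈ A ∪ B, mult u y) + ∑ y ∈ A ∩ B, mult u y =
            (∑ y ∈ A, mult u y) + ∑ y ∈ B, mult u y := Finset.sum_union_inter
        have h2 : ∑ y ∈ A ∩ B, mult u y ≤ ∑ y ∈ A, mult u y :=
          Finset.sum_le_sum_of_subset Finset.inter_subset_left
        have h3 : ∑ y ∈ A, mult u y ≤ ∑ y ∈ A ∪ B, mult u y :=
          Finset.sum_le_sum_of_subset Finset.subset_union_left
        omega
      have hsum := Finset.sum_le_sum key1
      rw [Finset.sum_add_distrib, Finset.sum_add_distrib] at hsum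
      have hg : (∑ y ∈ (A ∩ B)ᶜ, g y) + ∑ y ∈ (A ∪ B)ᶜ, g y =
          (∑ y ∈ Aᶜ, g y) + ∑ y ∈ Bᶜ, g y := by
        rw [Finset.compl_inter, Finset.compl_union]
        exact Finset.sum_union_inter
      have hi := hA (A ∩ B)
      have hu := hA (A ∪ B)
      have heqi : ∑ u, (f u - ∑ y ∈ A ∩ B, mult u y) = ∑ y ∈ (A ∩ B)ᶜ, g y := by omega
      have hsumeq : ∑ u, ((f u - ∑ y ∈ A, mult u y) + (f u - ∑ y ∈ B, mult u y)) =
          ∑ u, ((f u - ∑ y ∈ A ∩ B, mult u y) + (f u - ∑ y ∈ A ∪ B, mult u y)) := by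
        rw [Finset.sum_add_distrib, Finset.sum_add_distrib]
        omega
      have hpt := (Finset.sum_eq_sum_iff_of_le key1).mp hsumeq x (Finset.mem_univ x)
      refine ⟨heqi, ?_⟩
      have h2 : ∑ y ∈ A ∩ B, mult x y ≤ ∑ y ∈ A, mult x y :=
        Finset.sum_le_sum_of_subset Finset.inter_subset_left
      omega
    classical
    have hne : (Finset.univ.filter P).Nonempty :=
      ⟨Finset.univ, by simp only [Finset.mem_filter]; exact ⟨Finset.mem_univ _, hPuniv⟩⟩
    obtain ⟨T, hTmem, hTmin⟩ := Finset.exists_min_image (Finset.univ.filter P) Finset.card hne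
    have hTP : P T := (Finset.mem_filter.mp hTmem).2
    have hTsub : ∀ A, P A → T ⊆ A := by
      intro A hPA
      have h1 : P (A ∩ T) := hPinter A T hPA hTP
      have h2 : T.card ≤ (A ∩ T).card := hTmin _ (by
        simp only [Finset.mem_filter]; exact ⟨Finset.mem_univ _, h1⟩)
      have h3 : A ∩ T = T := Finset.eq_of_subset_of_card_le Finset.inter_subset_right h2
      rw [← h3]
      exact Finset.inter_subset_left
    obtain ⟨y, hyT, hmxy, hgy⟩ : ∃ y ∈ T, 0 < mult x y ∧ 0 < g y := by
      by_contra hcon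
      push_neg at hcon
      set A := T.filter (fun y => mult x y = 0) with hAdef
      have hmxA : ∑ y ∈ A, mult x y = 0 :=
        Finset.sum_eq_zero fun y hy => (Finset.mem_filter.mp hy).2
      have hgc : ∑ y ∈ Tᶜ, g y = ∑ y ∈ Aᶜ, g y := by
        apply Finset.sum_subset
        · intro v hv
          rw [Finset.mem_compl] at hv ⊢
          intro hvA
          exact hv ((Finset.mem_filter.mp hvA).1)
        · intro v hv hnv
          rw [Finset.mem_compl] at hv
          have hvT : v ∈ T := by
            by_contra h
            exact hnv (Finset.mem_compl.mpr h)
          have hvm : mult x v ≠ 0 := fun h0 => hv (Finset.mem_filter.mpr ⟨hvT, h0⟩)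
          have := hcon v hvT (Nat.pos_of_ne_zero hvm)
          omega
      have hlt : ∑ u, (f u - ∑ y ∈ T, mult u y) < ∑ u, (f u - ∑ y ∈ A, mult u y) := by
        apply Finset.sum_lt_sum
        · intro u _
          exact Nat.sub_le_sub_left
            (Finset.sum_le_sum_of_subset (Finset.filter_subset _ _)) _
        · refine ⟨x, Finset.mem_univ x, ?_⟩
          have := hTP.2
          omega
      have h1 := hA A
      have h2 := hTP.1
      omega
    -- decrement
    set f' : X → ℕ := fun u => if u = x then f u - 1 else f u with hf'
    set g' : Y → ℕ := fun v => if v = y then g v - 1 else g v with hg'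
    set mult' : X → Y → ℕ := fun u v => if u = x ∧ v = y then mult u v - 1 else mult u v
      with hmult'
    have hfx' : f' x = f x - 1 := by simp [hf']
    have hgy' : g' y = g y - 1 := by simp [hg']
    have hfxle : f x ≤ ∑ u, f u :=
      Finset.single_le_sum (fun i _ => Nat.zero_le _) (Finset.mem_univ x)
    have hgyle : g y ≤ ∑ v, g v :=
      Finset.single_le_sum (fun i _ => Nat.zero_le _) (Finset.mem_univ y)
    have hsf : ∑ u, f' u = n := by
      have e1 : ∑ u, f' u = f' x + ∑ u ∈ Finset.univ.erase x, f' u :=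
        (Finset.add_sum_erase _ _ (Finset.mem_univ x)).symm
      have e2 : ∑ u, f u = f x + ∑ u ∈ Finset.univ.erase x, f u :=
        (Finset.add_sum_erase _ _ (Finset.mem_univ x)).symm
      have e3 : ∑ u ∈ Finset.univ.erase x, f' u = ∑ u ∈ Finset.univ.erase x, f u :=
        Finset.sum_congr rfl fun u hu => by
          simp [hf', (Finset.mem_erase.mp hu).1]
      omega
    have hsg : ∑ v, g' v = n := by
      have e1 : ∑ v, g' v = g' y + ∑ v ∈ Finset.univ.erase y, g' v :=
        (Finset.add_sum_erase _ _ (Finset.mem_univ y)).symm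
      have e2 : ∑ v, g v = g y + ∑ v ∈ Finset.univ.erase y, g v :=
        (Finset.add_sum_erase _ _ (Finset.mem_univ y)).symm
      have e3 : ∑ v ∈ Finset.univ.erase y, g' v = ∑ v ∈ Finset.univ.erase y, g v :=
        Finset.sum_congr rfl fun v hv => by
          simp [hg', (Finset.mem_erase.mp hv).1]
      omega
    have hA' : ∀ A : Finset Y, ∑ u, (f' u - ∑ v ∈ A, mult' u v) ≤ ∑ v ∈ Aᶜ, g' v := by
      intro A
      have hsplit : ∑ u, (f' u - ∑ v ∈ A, mult' u v)
          = (f' x - ∑ v ∈ A, mult' x v) +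
            ∑ u ∈ Finset.univ.erase x, (f u - ∑ v ∈ A, mult u v) := by
        rw [← Finset.add_sum_erase _ _ (Finset.mem_univ x)]
        congr 1
        refine Finset.sum_congr rfl fun u hu => ?_
        have hux : u ≠ x := (Finset.mem_erase.mp hu).1
        simp [hf', hmult', hux]
      have hsplit2 : ∑ u, (f u - ∑ v ∈ A, mult u v)
          = (f x - ∑ v ∈ A, mult x v) +
            ∑ u ∈ Finset.univ.erase x, (f u - ∑ v ∈ A, mult u v) :=
        (Finset.add_sum_erase _ _ (Finset.mem_univ x)).symm
      have hAA := hA A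
      by_cases hyA : y ∈ A
      · have e1 : ∑ v ∈ A, mult' x v = mult' x y + ∑ v ∈ A.erase y, mult' x v :=
          (Finset.add_sum_erase _ _ hyA).symm
        have e2 : ∑ v ∈ A, mult x v = mult x y + ∑ v ∈ A.erase y, mult x v :=
          (Finset.add_sum_erase _ _ hyA).symm
        have e3 : ∑ v ∈ A.erase y, mult' x v = ∑ v ∈ A.erase y, mult x v :=
          Finset.sum_congr rfl fun v hv => by
            simp [hmult', (Finset.mem_erase.mp hv).1]
        have e4 : mult' x y = mult x y - 1 := by simp [hmult']
        have e5 : ∑ v ∈ Aᶜ, g' v = ∑ v ∈ Aᶜ, g v :=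
          Finset.sum_congr rfl fun v hv => by
            have hvy : v ≠ y := fun h => (Finset.mem_compl.mp hv) (h ▸ hyA)
            simp [hg', hvy]
        omega
      · have e1 : ∑ v ∈ A, mult' x v = ∑ v ∈ A, mult x v :=
          Finset.sum_congr rfl fun v hv => by
            have hvy : v ≠ y := fun h => hyA (h ▸ hv)
            simp [hmult', hvy]
        have hyAc : y ∈ Aᶜ := Finset.mem_compl.mpr hyA
        have e2 : ∑ v ∈ Aᶜ, g' v = g' y + ∑ v ∈ Aᶜ.erase y, g' v :=
          (Finset.add_sum_erase _ _ hyAc).symm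
        have e3 : ∑ v ∈ Aᶜ, g v = g y + ∑ v ∈ Aᶜ.erase y, g v :=
          (Finset.add_sum_erase _ _ hyAc).symm
        have e4 : ∑ v ∈ Aᶜ.erase y, g' v = ∑ v ∈ Aᶜ.erase y, g v :=
          Finset.sum_congr rfl fun v hv => by
            simp [hg', (Finset.mem_erase.mp hv).1]
        by_cases hsat : f x ≤ ∑ v ∈ A, mult x v
        · have hnt : ∑ u, (f u - ∑ v ∈ A, mult u v) ≠ ∑ v ∈ Aᶜ, g v := by
            intro heq
            exact hyA (hTsub A ⟨heq, hsat⟩ hyT)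
          omega
        · omega
    obtain ⟨F', hF'le, hF'row, hF'col⟩ := ih mult' f' g' hsf (by omega) hA'
    refine ⟨fun u v => F' u v + (if u = x ∧ v = y then 1 else 0), ?_, ?_, ?_⟩
    · intro u v
      by_cases h : u = x ∧ v = y
      · obtain ⟨hu, hv⟩ := h
        subst hu; subst hv
        have := hF'le u v
        simp only [hmult', and_self, if_true] at this ⊢
        omega
      · have := hF'le u v
        simp only [hmult', h, if_false] at this ⊢
        omega
    · intro u
      rw [Finset.sum_add_distrib, hF'row u]
      by_cases hu : u = x
      · subst hu
        have : ∑ v, (if u = u ∧ v = y then 1 else 0) = 1 := by simp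
        rw [this, hfx']
        omega
      · have : ∑ v, (if u = x ∧ v = y then 1 else 0) = 0 := by simp [hu]
        rw [this]
        simp [hf', hu]
    · intro v
      rw [Finset.sum_add_distrib, hF'col v]
      by_cases hv : v = y
      · subst hv
        have h1 : ∑ u ∈ Finset.univ, (if u = x ∧ v = v then 1 else 0) = 1 := by simp
        rw [h1, hgy']
        omega
      · have : ∑ u ∈ Finset.univ, (if u = x ∧ v = y then 1 else 0) = 0 := by simp [hv]
        rw [this]
        simp [hg', hv]

/-- Ore's f-factor theorem for bipartite multigraphs: a bipartite multigraph with
parts X, Y (encoded by its edge multiplicity function) has an f-factor iff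
f(X) = f(Y) and for every A ⊆ Y,
Σ_{y∉A} f(y) ≥ Σ_{u∈X} max(0, f(u) − mult(u, A)). -/
theorem stmt8 {X Y : Type*} [Fintype X] [Fintype Y] [DecidableEq Y]
    (mult : X → Y → ℕ) (f : X → ℕ) (g : Y → ℕ) :
    (∃ F : X → Y → ℕ,
        (∀ x y, F x y ≤ mult x y) ∧ (∀ x, ∑ y, F x y = f x) ∧ (∀ y, ∑ x, F x y = g y)) ↔
    ((∑ x, f x = ∑ y, g y) ∧
      ∀ A : Finset Y, ∑ u, (f u - ∑ y ∈ A, mult u y) ≤ ∑ y ∈ Aᶜ, g y) := by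
  constructor
  · rintro ⟨F, hle, hrow, hcol⟩
    refine ⟨?_, ?_⟩
    · calc ∑ x, f x = ∑ x, ∑ y, F x y := by simp [hrow]
        _ = ∑ y, ∑ x, F x y := Finset.sum_comm
        _ = ∑ y, g y := by simp [hcol]
    · intro A
      have h1 : ∀ u, f u - ∑ y ∈ A, mult u y ≤ ∑ y ∈ Aᶜ, F u y := by
        intro u
        have hf : (∑ y ∈ A, F u y) + ∑ y ∈ Aᶜ, F u y = f u := by
          rw [Finset.sum_add_sum_compl]
          exact hrow u
        have h2 : ∑ y ∈ A, F u y ≤ ∑ y ∈ A, mult u y :=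
          Finset.sum_le_sum fun y _ => hle u y
        omega
      calc ∑ u, (f u - ∑ y ∈ A, mult u y) ≤ ∑ u, ∑ y ∈ Aᶜ, F u y :=
            Finset.sum_le_sum fun u _ => h1 u
        _ = ∑ y ∈ Aᶜ, ∑ u, F u y := Finset.sum_comm
        _ = ∑ y ∈ Aᶜ, g y := by simp [hcol]
  · rintro ⟨h1, h2⟩
    classical
    exact key8 (∑ x, f x) mult f g rfl h1 h2
end

section
/- Let M be an r×n (ρ,λ)-Latin rectangle with r ≤ n ≤ k (so M fills all n columns). If M extends to an n×n (ρ,λ)-Latin square, then for every symbol ℓ, ρ_ℓ − |M_ℓ| ≤ λ(n−r), and for every subset K ⊆ [k], Σ_{j∈[n]} max(0, λn − λr + |M_K^{(j)}| − λ|K|) ≤ Σ_{ℓ∉K} (ρ_ℓ − |M_ℓ|), where |M_K^{(j)}| is the number of occurrences of symbols of K in column j of M. -/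
open Finset

/-- Hall-type necessity: if an r×n (ρ,λ)-Latin rectangle M extends to an n×n
(ρ,λ)-Latin square, then ρ_ℓ − |M_ℓ| ≤ λ(n−r) for every ℓ, and for every K ⊆ [k],
Σ_{j∈[n]} max(0, λn − λr + |M_K^{(j)}| − λ|K|) ≤ Σ_{ℓ∉K} (ρ_ℓ − |M_ℓ|). -/
theorem stmt11 (r n k L : ℕ) (hr : r ≤ n) (hnk : n ≤ k) (hL : 1 ≤ L)
    (ρ : Fin k → ℕ) (hρ1 : ∀ ℓ, 1 ≤ ρ ℓ) (hρ2 : ∀ ℓ, ρ ℓ ≤ L * n)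
    (hρsum : ∑ ℓ, ρ ℓ = L * n ^ 2)
    (M : Fin r → Fin n → Fin k → ℕ)
    (hMcell : ∀ i j, ∑ ℓ, M i j ℓ = L)
    (hMtot : ∀ ℓ, ∑ i, ∑ j, M i j ℓ ≤ ρ ℓ)
    (hMrow : ∀ i ℓ, ∑ j, M i j ℓ ≤ L)
    (hMcol : ∀ j ℓ, ∑ i, M i j ℓ ≤ L)
    (N : Fin n → Fin n → Fin k → ℕ)
    (hNcell : ∀ i j, ∑ ℓ, N i j ℓ = L)
    (hNtot : ∀ ℓ, ∑ i, ∑ j, N i j ℓ = ρ ℓ)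
    (hNrow : ∀ i ℓ, ∑ j, N i j ℓ ≤ L)
    (hNcol : ∀ j ℓ, ∑ i, N i j ℓ ≤ L)
    (hext : ∀ i j, N (Fin.castLE hr i) j = M i j) :
    (∀ ℓ, ρ ℓ - ∑ i, ∑ j, M i j ℓ ≤ L * (n - r)) ∧
    (∀ K : Finset (Fin k),
      ∑ j : Fin n, (L * n - L * r + (∑ i, ∑ ℓ ∈ K, M i j ℓ) - L * K.card) ≤
        ∑ ℓ ∈ Kᶜ, (ρ ℓ - ∑ i, ∑ j, M i j ℓ)) := by

  classical
  have einj : Function.Injective (Fin.castLE hr) := fun a b h => by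
    have := congrArg Fin.val h; simpa [Fin.ext_iff] using this
  set S : Finset (Fin n) := Finset.univ.map ⟨Fin.castLE hr, einj⟩ with hS
  have hSsum : ∀ (f : Fin n → ℕ), ∑ i ∈ S, f i = ∑ i : Fin r, f (Fin.castLE hr i) := by
    intro f; rw [hS, Finset.sum_map]; rfl
  have hScard : S.card = r := by simp [hS]
  have hTcard : Sᶜ.card = n - r := by
    rw [Finset.card_compl, hScard]; simp
  have key : ∀ ℓ, ∑ i ∈ Sᶜ, ∑ j, N i j ℓ = ρ ℓ - ∑ i, ∑ j, M i j ℓ := by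
    intro ℓ
    have h1 : ∑ i ∈ S, ∑ j, N i j ℓ = ∑ i, ∑ j, M i j ℓ := by
      rw [hSsum]
      exact Finset.sum_congr rfl fun i _ => Finset.sum_congr rfl fun j _ => by rw [hext]
    have h2 : ∑ i ∈ S, ∑ j, N i j ℓ + ∑ i ∈ Sᶜ, ∑ j, N i j ℓ = ρ ℓ := by
      rw [Finset.sum_add_sum_compl]; exact hNtot ℓ
    omega
  constructor
  · intro ℓ
    rw [← key ℓ]
    calc ∑ i ∈ Sᶜ, ∑ j, N i j ℓ ≤ ∑ _i ∈ Sᶜ, L :=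
          Finset.sum_le_sum fun i _ => hNrow i ℓ
      _ = (n - r) * L := by rw [Finset.sum_const, hTcard, smul_eq_mul]
      _ = L * (n - r) := Nat.mul_comm _ _
  · intro K
    have colbound : ∀ j, L * n - L * r + (∑ i, ∑ ℓ ∈ K, M i j ℓ) - L * K.card
        ≤ ∑ i ∈ Sᶜ, ∑ ℓ ∈ Kᶜ, N i j ℓ := by
      intro j
      have hA : ∑ i ∈ S, ∑ ℓ ∈ K, N i j ℓ = ∑ i : Fin r, ∑ ℓ ∈ K, M i j ℓ := by
        rw [hSsum]
        exact Finset.sum_congr rfl fun i _ => Finset.sum_congr rfl fun ℓ _ => by rw [hext]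
      have hK : ∑ i ∈ S, ∑ ℓ ∈ K, N i j ℓ + ∑ i ∈ Sᶜ, ∑ ℓ ∈ K, N i j ℓ ≤ L * K.card := by
        rw [Finset.sum_add_sum_compl]
        calc ∑ i, ∑ ℓ ∈ K, N i j ℓ = ∑ ℓ ∈ K, ∑ i, N i j ℓ := Finset.sum_comm
          _ ≤ ∑ _ℓ ∈ K, L := Finset.sum_le_sum fun ℓ _ => hNcol j ℓ
          _ = L * K.card := by rw [Finset.sum_const, smul_eq_mul, Nat.mul_comm]
      have hT : ∑ i ∈ Sᶜ, ∑ ℓ ∈ K, N i j ℓ + ∑ i ∈ Sᶜ, ∑ ℓ ∈ Kᶜ, N i j ℓ = L * (n - r) := by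
        have hcell : ∀ i : Fin n, ∑ ℓ ∈ K, N i j ℓ + ∑ ℓ ∈ Kᶜ, N i j ℓ = L := fun i => by
          rw [Finset.sum_add_sum_compl]; exact hNcell i j
        calc ∑ i ∈ Sᶜ, ∑ ℓ ∈ K, N i j ℓ + ∑ i ∈ Sᶜ, ∑ ℓ ∈ Kᶜ, N i j ℓ
            = ∑ i ∈ Sᶜ, (∑ ℓ ∈ K, N i j ℓ + ∑ ℓ ∈ Kᶜ, N i j ℓ) := Finset.sum_add_distrib.symm
          _ = ∑ _i ∈ Sᶜ, L := Finset.sum_congr rfl fun i _ => hcell i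
          _ = L * (n - r) := by rw [Finset.sum_const, hTcard, smul_eq_mul, Nat.mul_comm]
      have hmul : L * n = L * r + L * (n - r) := by
        rw [← Nat.mul_add, Nat.add_sub_cancel' hr]
      rw [← hA]
      generalize hx1 : (∑ i ∈ S, ∑ ℓ ∈ K, N i j ℓ) = a at *
      generalize hx2 : (∑ i ∈ Sᶜ, ∑ ℓ ∈ K, N i j ℓ) = b at *
      generalize hx3 : (∑ i ∈ Sᶜ, ∑ ℓ ∈ Kᶜ, N i j ℓ) = c at *
      generalize hx4 : L * n = p at *
      generalize hx5 : L * r = q at *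
      generalize hx6 : L * (n - r) = s at *
      generalize hx7 : L * K.card = t at *
      omega
    calc ∑ j : Fin n, (L * n - L * r + (∑ i, ∑ ℓ ∈ K, M i j ℓ) - L * K.card)
        ≤ ∑ j : Fin n, ∑ i ∈ Sᶜ, ∑ ℓ ∈ Kᶜ, N i j ℓ :=
          Finset.sum_le_sum fun j _ => colbound j
      _ = ∑ i ∈ Sᶜ, ∑ j : Fin n, ∑ ℓ ∈ Kᶜ, N i j ℓ := Finset.sum_comm
      _ = ∑ i ∈ Sᶜ, ∑ ℓ ∈ Kᶜ, ∑ j : Fin n, N i j ℓ :=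
          Finset.sum_congr rfl fun i _ => Finset.sum_comm
      _ = ∑ ℓ ∈ Kᶜ, ∑ i ∈ Sᶜ, ∑ j : Fin n, N i j ℓ := Finset.sum_comm
      _ = ∑ ℓ ∈ Kᶜ, (ρ ℓ - ∑ i, ∑ j, M i j ℓ) :=
          Finset.sum_congr rfl fun ℓ _ => key ℓ
end

section
/- Suppose a simple r×s (ρ,λ)-Latin rectangle M extends to a simple n×n (ρ,λ)-Latin square. Then for every row i of M, λ(n−s) ≤ Σ_{ℓ∈[k]} min(n−s, λ − |M_ℓ^i|). -/
open Finset

/-- If a simple r×s (ρ,λ)-Latin rectangle M extends to a simple n×n (ρ,λ)-Latin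
square, then for every row i, λ(n−s) ≤ Σ_ℓ min(n−s, λ − |M_ℓ^i|). -/
theorem stmt12 (r s n k L : ℕ) (hr : r ≤ n) (hs : s ≤ n) (hnk : n ≤ k) (hL : 1 ≤ L)
    (ρ : Fin k → ℕ) (hρ1 : ∀ ℓ, 1 ≤ ρ ℓ) (hρ2 : ∀ ℓ, ρ ℓ ≤ L * n)
    (hρsum : ∑ ℓ, ρ ℓ = L * n ^ 2)
    (M : Fin r → Fin s → Fin k → ℕ)
    (hMcell : ∀ i j, ∑ ℓ, M i j ℓ = L)
    (hMtot : ∀ ℓ, ∑ i, ∑ j, M i j ℓ ≤ ρ ℓ)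
    (hMrow : ∀ i ℓ, ∑ j, M i j ℓ ≤ L)
    (hMcol : ∀ j ℓ, ∑ i, M i j ℓ ≤ L)
    (hMsimple : ∀ i j ℓ, M i j ℓ ≤ 1)
    (N : Fin n → Fin n → Fin k → ℕ)
    (hNcell : ∀ i j, ∑ ℓ, N i j ℓ = L)
    (hNtot : ∀ ℓ, ∑ i, ∑ j, N i j ℓ = ρ ℓ)
    (hNrow : ∀ i ℓ, ∑ j, N i j ℓ ≤ L)
    (hNcol : ∀ j ℓ, ∑ i, N i j ℓ ≤ L)
    (hNsimple : ∀ i j ℓ, N i j ℓ ≤ 1)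
    (hext : ∀ i j, N (Fin.castLE hr i) (Fin.castLE hs j) = M i j) :
    ∀ i : Fin r, L * (n - s) ≤ ∑ ℓ, min (n - s) (L - ∑ j, M i j ℓ) := by
  intro i
  classical
  set i' := Fin.castLE hr i with hi'
  set S : Finset (Fin n) := univ.filter (fun j : Fin n => j.val < s) with hS
  set T : Finset (Fin n) := univ.filter (fun j : Fin n => ¬ j.val < s) with hT
  have hSmap : S = univ.map (Fin.castLEEmb hs) := by
    ext j
    simp only [hS, mem_filter, mem_univ, true_and, mem_map, Fin.castLEEmb]
    constructor
    · intro hj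
      exact ⟨⟨j.val, hj⟩, by simp [Fin.castLE, Fin.ext_iff]⟩
    · rintro ⟨a, rfl⟩
      exact a.isLt
  have hScard : S.card = s := by rw [hSmap]; simp
  have hTcard : T.card = n - s := by
    have := Finset.card_filter_add_card_filter_not
      (s := (univ : Finset (Fin n))) (p := fun j : Fin n => j.val < s)
    simp only [Finset.card_univ, Fintype.card_fin] at this
    rw [← hS, ← hT] at this
    omega
  have hSsum : ∀ ℓ, ∑ j ∈ S, N i' j ℓ = ∑ j, M i j ℓ := by
    intro ℓ
    rw [hSmap, Finset.sum_map]
    simp only [Fin.castLEEmb_apply]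
    exact Finset.sum_congr rfl fun j _ => by rw [hext]
  have key : ∀ ℓ, ∑ j ∈ T, N i' j ℓ ≤ min (n - s) (L - ∑ j, M i j ℓ) := by
    intro ℓ
    refine le_min ?_ ?_
    · calc ∑ j ∈ T, N i' j ℓ ≤ ∑ j ∈ T, 1 :=
            Finset.sum_le_sum fun j _ => hNsimple i' j ℓ
        _ = n - s := by rw [Finset.sum_const, hTcard, smul_eq_mul, mul_one]
    · have hsplit : ∑ j ∈ S, N i' j ℓ + ∑ j ∈ T, N i' j ℓ = ∑ j, N i' j ℓ :=
        Finset.sum_filter_add_sum_filter_not _ _ _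
      have h1 := hNrow i' ℓ
      rw [hSsum ℓ] at hsplit
      omega
  calc L * (n - s) = ∑ j ∈ T, ∑ ℓ, N i' j ℓ := by
        simp only [hNcell]
        rw [Finset.sum_const, hTcard, smul_eq_mul, mul_comm]
    _ = ∑ ℓ, ∑ j ∈ T, N i' j ℓ := Finset.sum_comm
    _ ≤ ∑ ℓ, min (n - s) (L - ∑ j, M i j ℓ) :=
        Finset.sum_le_sum fun ℓ _ => key ℓ
end
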